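/- arXiv:1406.4679 — 9 statements merged into one kernel-verified Lean document; each statement's English description precedes it below -/
import Mathlib

section
/- Let k ≥ 2, let A and B be finite relational structures over the same vocabulary, and let d ≥ 0. There exists a CSP-refutation of (A,B) of width at most k−1 and depth at most d if and only if Spoiler has a strategy to win the existential k-pebble game on A and B within d rounds. -/
/-- A relational structure over the vocabulary `ι` (a type of relation symbols)
with universe `V`: each relation symbol is interpreted as a set of tuples
(lists) over `V`. -/
structure RelStruct (ι V : Type) where
  rel : ι → List V → Prop

namespace CSP

variable {ι α β : Type}

/-- A finite set of pairs is a partial map if it is functional. -/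
def Functional (p : Finset (α × β)) : Prop :=
  ∀ ⦃x : α⦄ ⦃y y' : β⦄, (x, y) ∈ p → (x, y') ∈ p → y = y'

/-- `p` is a partial homomorphism from `A` to `B`: it is a partial map, and every
tuple of elements of its domain that belongs to a relation of `A` is mapped
coordinatewise to a tuple of the corresponding relation of `B`. -/
def PartialHom (A : RelStruct ι α) (B : RelStruct ι β) (p : Finset (α × β)) : Prop :=
  Functional p ∧
  ∀ (R : ι) (t : List α) (t' : List β),
    List.Forall₂ (fun x y => (x, y) ∈ p) t t' → A.rel R t → B.rel R t'

/-- A structure is binary if all of its relations consist of tuples of arity at most 2. -/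
def Binary (A : RelStruct ι α) : Prop := ∀ R t, A.rel R t → t.length ≤ 2

/-- `Deriv A B w p d` holds iff the partial map `p` has a CSP-derivation of width at
most `w` and depth at most `d`: axioms are the partial maps that are not partial
homomorphisms (of any depth), and a non-axiom line `p` with `|p| ≤ w` may be derived
from the premises `p'_b ∪ {x ↦ b}` (for all `b ∈ V(B)`), where each `p'_b ⊆ p`,
increasing the depth by one. -/
inductive Deriv [DecidableEq α] [DecidableEq β]
    (A : RelStruct ι α) (B : RelStruct ι β) (w : ℕ) :
    Finset (α × β) → ℕ → Prop
  | ax {p : Finset (α × β)} {d : ℕ} :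
      Functional p → ¬ PartialHom A B p → Deriv A B w p d
  | rule {p : Finset (α × β)} {d : ℕ} (x : α) (prem : β → Finset (α × β)) :
      Functional p → p.card ≤ w →
      (∀ b : β, prem b ⊆ p) →
      (∀ b : β, Deriv A B w (insert (x, b) (prem b)) d) →
      Deriv A B w p (d + 1)

end CSP

namespace CSP

variable {ι α β : Type}

/-- `SpoilerWin A B k p d`: Spoiler has a strategy to win the existential `k`-pebble game
on `A` and `B` within `d` rounds (pebble placements), starting from position `p`.
Either the current position is already not a partial homomorphism, or Spoiler picks up
some pebbles (keeping `p' ⊆ p` with `|p'| < k`), places a free pebble on some `x ∈ V(A)`,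
and wins within the remaining rounds against every answer `b ∈ V(B)` of Duplicator. -/
inductive SpoilerWin [DecidableEq α] [DecidableEq β]
    (A : RelStruct ι α) (B : RelStruct ι β) (k : ℕ) :
    Finset (α × β) → ℕ → Prop
  | win {p : Finset (α × β)} {d : ℕ} :
      ¬ PartialHom A B p → SpoilerWin A B k p d
  | move {p : Finset (α × β)} {d : ℕ} (p' : Finset (α × β)) (x : α) :
      p' ⊆ p → p'.card < k →
      (∀ b : β, SpoilerWin A B k (insert (x, b) p') d) →
      SpoilerWin A B k p (d + 1)

end CSP

/-
A derivation is a Spoiler strategy: at a derived line `p` (at most `k - 1` pebbles) Spoiler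
keeps the pebbles on `p` and places the last one on the variable of the rule; each answer
leads to a position containing a premise, and winning is monotone in the position.

Conversely, a winning strategy from a partial map `q` yields a derivable line inside `q`.
When Spoiler keeps `p'` and places a pebble on a fresh `x`, the lines obtained for the
answers `b` either all contain `x ↦ b`, and then they are the premises of a rule deriving
`p'`, or one of them lies inside `p'`, and then it weakens to `p'` itself.
-/

namespace CSP

variable {ι α β : Type} {A : RelStruct ι α} {B : RelStruct ι β} {p q : Finset (α × β)}

theorem functional_empty : Functional (∅ : Finset (α × β)) :=
  fun _ _ _ h => absurd h (Finset.notMem_empty _)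

theorem Functional.subset (hq : Functional q) (hpq : p ⊆ q) : Functional p :=
  fun _ _ _ hy hy' => hq (hpq hy) (hpq hy')

theorem PartialHom.subset (hq : PartialHom A B q) (hpq : p ⊆ q) : PartialHom A B p :=
  ⟨hq.1.subset hpq, fun R t t' ht hA => hq.2 R t t' (ht.imp fun _ _ h => hpq h) hA⟩

variable [DecidableEq α] [DecidableEq β]

theorem Functional.insert_of_forall_notMem (hp : Functional p) {x : α}
    (hx : ∀ y, (x, y) ∉ p) (b : β) : Functional (insert (x, b) p) := by
  intro x' y y' hy hy'
  rcases Finset.mem_insert.1 hy with hy | hy <;> rcases Finset.mem_insert.1 hy' with hy' | hy'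
  · simp_all
  · simp only [Prod.mk.injEq] at hy; exact absurd (hy.1 ▸ hy') (hx y')
  · simp only [Prod.mk.injEq] at hy'; exact absurd (hy'.1 ▸ hy) (hx y)
  · exact hp hy hy'

theorem SpoilerWin.of_subset {k d : ℕ} (h : SpoilerWin A B k p d) (hpq : p ⊆ q) :
    SpoilerWin A B k q d := by
  cases h with
  | win hnp => exact .win fun hq => hnp (hq.subset hpq)
  | move p' x hsub hcard hwin => exact .move p' x (hsub.trans hpq) hcard hwin

section Deriv

variable {w d : ℕ}

theorem Deriv.succ (h : Deriv A B w p d) : Deriv A B w p (d + 1) := by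
  induction h with
  | ax hp hnp => exact .ax hp hnp
  | rule x prem hp hcard hprem _ ih => exact .rule x prem hp hcard hprem ih

theorem Deriv.of_subset (h : Deriv A B w p d) (hpq : p ⊆ q) (hq : Functional q)
    (hcard : q.card ≤ w) : Deriv A B w q d := by
  cases h with
  | ax _ hnp => exact .ax hq fun hpq' => hnp (hpq'.subset hpq)
  | rule x prem _ _ hprem hd => exact .rule x prem hq hcard (fun b => (hprem b).trans hpq) hd

theorem Deriv.spoilerWin {k : ℕ} (hk : 1 ≤ k) (h : Deriv A B (k - 1) p d) :
    SpoilerWin A B k p d := by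
  induction h with
  | ax _ hnp => exact .win hnp
  | rule x prem _ hcard hprem _ ih =>
    refine .move _ x subset_rfl (by omega) fun b => ?_
    exact (ih b).of_subset (Finset.insert_subset_insert _ (hprem b))

end Deriv

theorem SpoilerWin.exists_deriv_subset {k d : ℕ} (h : SpoilerWin A B k q d)
    (hq : Functional q) : ∃ r ⊆ q, Deriv A B (k - 1) r d := by
  induction h with
  | win hnp => exact ⟨_, subset_rfl, .ax hq hnp⟩
  | @move q D p' x hsub hcard _ ih =>
    have hp' : Functional p' := hq.subset hsub
    have hcard' : p'.card ≤ k - 1 := by omega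
    have weaken : ∀ r ⊆ p', Deriv A B (k - 1) r D → ∃ r ⊆ q, Deriv A B (k - 1) r (D + 1) :=
      fun r hr hd => ⟨p', hsub, (hd.of_subset hr hp' hcard').succ⟩
    -- on an occupied `x`, the answer `y` keeps the position at `p'`
    by_cases hx : ∃ y, (x, y) ∈ p'
    · obtain ⟨y, hy⟩ := hx
      obtain ⟨r, hr, hd⟩ := ih y (by rwa [Finset.insert_eq_of_mem hy])
      exact weaken r (by rwa [Finset.insert_eq_of_mem hy] at hr) hd
    push Not at hx
    choose r hr hd using fun b => ih b (hp'.insert_of_forall_notMem hx b)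
    by_cases hfresh : ∃ b, (x, b) ∉ r b
    · obtain ⟨b, hb⟩ := hfresh
      exact weaken (r b) ((Finset.subset_insert_iff_of_notMem hb).1 (hr b)) (hd b)
    push Not at hfresh
    refine ⟨p', hsub, .rule x (fun b => (r b).erase (x, b)) hp' hcard'
      (fun b => Finset.subset_insert_iff.1 (hr b)) fun b => ?_⟩
    rw [Finset.insert_erase (hfresh b)]
    exact hd b

end CSP

theorem csp_refutation_iff_spoiler_win_general
    {ι α β : Type} [DecidableEq α] [DecidableEq β]
    (k d : ℕ) (hk : 2 ≤ k) (A : RelStruct ι α) (B : RelStruct ι β) :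
    CSP.Deriv A B (k - 1) (∅ : Finset (α × β)) d ↔
      CSP.SpoilerWin A B k (∅ : Finset (α × β)) d := by
  refine ⟨CSP.Deriv.spoilerWin (by omega), fun h => ?_⟩
  obtain ⟨r, hr, hd⟩ := h.exists_deriv_subset CSP.functional_empty
  rwa [Finset.subset_empty.1 hr] at hd

/-- there is a CSP-refutation of `(A,B)` of width at most `k-1` and depth at
most `d` iff Spoiler has a strategy to win the existential `k`-pebble game on `A` and `B`
within `d` rounds. -/
theorem csp_refutation_iff_spoiler_win
    {ι α β : Type} [DecidableEq α] [DecidableEq β] [Fintype α] [Fintype β]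
    (k d : ℕ) (hk : 2 ≤ k) (A : RelStruct ι α) (B : RelStruct ι β) :
    CSP.Deriv A B (k - 1) (∅ : Finset (α × β)) d ↔
      CSP.SpoilerWin A B k (∅ : Finset (α × β)) d :=
  csp_refutation_iff_spoiler_win_general k d hk A B
end

section
/- Let k ≥ 2, let A and B be finite relational structures over the same vocabulary, and let p be a partial map from V(A) to V(B) with |p| ≤ k. If Spoiler has a strategy to win the existential k-pebble game on A and B within i rounds starting from the position p, then some subset p' ⊆ p has a CSP-derivation of width at most k−1 and depth at most i. -/
/-! Induction on Spoiler's strategy. At a move `(p', x)`, each answer `b` yields a derivation of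
some `q_b ⊆ p' ∪ {x ↦ b}`. If some `q_b` avoids `x ↦ b`, it already lies in `p'`; otherwise the
sets `q_b \ {x ↦ b}` are premises of one rule application deriving `p'`, whose width `|p'| < k`
is exactly what Spoiler's pebble budget guarantees. A move on an already pebbled `x` changes
nothing, and only costs a round. -/

namespace CSP

variable {ι α β : Type}

theorem Functional.mono {p q : Finset (α × β)} (hp : Functional p) (hq : q ⊆ p) :
    Functional q :=
  fun _ _ _ h h' => hp (hq h) (hq h')

theorem Functional.insert [DecidableEq α] [DecidableEq β] {p : Finset (α × β)}
    (hp : Functional p) {x : α} (hx : ∀ b, (x, b) ∉ p) (b : β) :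
    Functional (insert (x, b) p) := by
  intro z y y' h h'
  simp only [Finset.mem_insert, Prod.mk.injEq] at h h'
  rcases h with ⟨rfl, rfl⟩ | h <;> rcases h' with ⟨hz, rfl⟩ | h'
  · rfl
  · exact absurd h' (hx y')
  · exact absurd h (hz ▸ hx y)
  · exact hp h h'

variable [DecidableEq α] [DecidableEq β] {A : RelStruct ι α} {B : RelStruct ι β} {w : ℕ}

theorem Deriv.mono {p : Finset (α × β)} {d d' : ℕ} (h : Deriv A B w p d) (hd : d ≤ d') :
    Deriv A B w p d' := by
  induction h generalizing d' with
  | ax hfun hnot => exact .ax hfun hnot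
  | rule x prem hfun hw hprem _ ih =>
    obtain ⟨e, rfl⟩ : ∃ e, d' = e + 1 := Nat.exists_eq_succ_of_ne_zero (by omega)
    exact .rule x prem hfun hw hprem fun b => ih b (by omega)

theorem exists_deriv_subset_of_forall_insert {p : Finset (α × β)} {d : ℕ} (x : α)
    (hp : Functional p) (hw : p.card ≤ w)
    (h : ∀ b, ∃ q ⊆ insert (x, b) p, Deriv A B w q d) :
    ∃ q ⊆ p, Deriv A B w q (d + 1) := by
  choose q hqp hq using h
  by_cases hall : ∀ b, (x, b) ∈ q b
  · refine ⟨p, subset_rfl, .rule x (fun b => (q b).erase (x, b)) hp hw (fun b => ?_) fun b => ?_⟩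
    · exact Finset.subset_insert_iff.mp (hqp b)
    · rw [Finset.insert_erase (hall b)]
      exact hq b
  · obtain ⟨b, hb⟩ := not_forall.mp hall
    exact ⟨q b, (Finset.subset_insert_iff_of_notMem hb).mp (hqp b), (hq b).mono d.le_succ⟩

end CSP

theorem spoiler_win_to_csp_derivation_general
    {ι α β : Type} [DecidableEq α] [DecidableEq β]
    (k i : ℕ) (A : RelStruct ι α) (B : RelStruct ι β)
    (p : Finset (α × β)) (hfun : CSP.Functional p)
    (hwin : CSP.SpoilerWin A B k p i) :
    ∃ p' ⊆ p, CSP.Deriv A B (k - 1) p' i := by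
  induction hwin with
  | win hnot => exact ⟨_, subset_rfl, .ax hfun hnot⟩
  | @move p d p' x hsub hcard _ ih =>
    have hfun' := hfun.mono hsub
    by_cases hx : ∃ b, (x, b) ∈ p'
    · obtain ⟨b, hb⟩ := hx
      have ihb := ih b
      rw [Finset.insert_eq_of_mem hb] at ihb
      obtain ⟨q, hq, hder⟩ := ihb hfun'
      exact ⟨q, hq.trans hsub, hder.mono d.le_succ⟩
    · obtain ⟨q, hq, hder⟩ := CSP.exists_deriv_subset_of_forall_insert x hfun'
        (Nat.le_sub_one_of_lt hcard) fun b => ih b (hfun'.insert (fun b hb => hx ⟨b, hb⟩) b)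
      exact ⟨q, hq.trans hsub, hder⟩

/-- if Spoiler can win the existential `k`-pebble game within `i` rounds
starting from the position `p` (a partial map with `|p| ≤ k`), then some subset
`p' ⊆ p` has a CSP-derivation of width at most `k-1` and depth at most `i`. -/
theorem spoiler_win_to_csp_derivation
    {ι α β : Type} [DecidableEq α] [DecidableEq β] [Fintype α] [Fintype β]
    (k i : ℕ) (hk : 2 ≤ k) (A : RelStruct ι α) (B : RelStruct ι β)
    (p : Finset (α × β)) (hfun : CSP.Functional p) (hcard : p.card ≤ k)
    (hwin : CSP.SpoilerWin A B k p i) :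
    ∃ p' ⊆ p, CSP.Deriv A B (k - 1) p' i :=
  spoiler_win_to_csp_derivation_general k i A B p hfun hwin
end

section
/- Let K ≥ 2 and let A and B be finite relational structures over the same vocabulary. If H_1, …, H_l is a sequence of critical strategies for Duplicator in the existential K-pebble game on A and B such that for every i < l and every critical position p ∈ crit(H_i) there is some j ≤ i+1 with p ∈ H_j ∖ crit(H_j), then Duplicator wins the l-round existential K-pebble game on A and B. -/
namespace CSP

variable {ι α β : Type}

/-- `H` together with the set `crit ⊆ H` of critical positions is a critical strategy for
Duplicator in the existential `K`-pebble game on `A` and `B`. -/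
structure IsCriticalStrategy [DecidableEq α] [DecidableEq β]
    (A : RelStruct ι α) (B : RelStruct ι β) (K : ℕ)
    (H crit : Set (Finset (α × β))) : Prop where
  nonempty : H.Nonempty
  crit_subset : crit ⊆ H
  isHom : ∀ p ∈ H, PartialHom A B p
  crit_card : ∀ p ∈ crit, p.card = K - 1
  downward : ∀ p ∈ H, ∀ q ⊆ p, q ∈ H
  extend : ∀ g ∈ H, g ∉ crit → g.card < K → ∀ x : α, ∃ b : β, insert (x, b) g ∈ H

/-- `DupSurvive A B K l p`: Duplicator has a strategy guaranteeing that, starting from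
position `p`, Spoiler does not win the existential `K`-pebble game within `l` further
pebble placements: the current position is a partial homomorphism and, whenever Spoiler
picks up pebbles and places a free pebble on `x`, Duplicator can answer with some `b`
and survive the remaining rounds. -/
def DupSurvive [DecidableEq α] [DecidableEq β]
    (A : RelStruct ι α) (B : RelStruct ι β) (K : ℕ) :
    ℕ → Finset (α × β) → Prop
  | 0, p => PartialHom A B p
  | l + 1, p => PartialHom A B p ∧
      ∀ p' ⊆ p, p'.card < K → ∀ x : α, ∃ b : β, DupSurvive A B K l (insert (x, b) p')

end CSP

/-!
Duplicator keeps the current position inside one of the strategies `H i`. From a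
non-critical position of `H i` she answers inside `H i`; when Spoiler retreats to a
critical position of `H i`, the sequence condition lets her continue inside some `H j`
with `j ≤ i + 1`, where that position is non-critical. Each round thus raises the index by
at most one, so `l` rounds stay within `H 1, …, H l`; the first round starts from `∅`,
which is never critical since critical positions have size `K - 1 ≥ 1`.
-/

namespace CSP

variable {ι α β : Type} [DecidableEq α] [DecidableEq β]
  {A : RelStruct ι α} {B : RelStruct ι β} {K : ℕ}

namespace IsCriticalStrategy

variable {H crit : Set (Finset (α × β))}

theorem empty_mem (hH : IsCriticalStrategy A B K H crit) : ∅ ∈ H := by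
  obtain ⟨q, hq⟩ := hH.nonempty
  exact hH.downward q hq ∅ (Finset.empty_subset q)

theorem empty_notMem_crit (hH : IsCriticalStrategy A B K H crit) (hK : 2 ≤ K) : ∅ ∉ crit := by
  intro h
  have := hH.crit_card ∅ h
  rw [Finset.card_empty] at this
  omega

end IsCriticalStrategy

structure IsCriticalSequence (A : RelStruct ι α) (B : RelStruct ι β) (K l : ℕ)
    (H crit : ℕ → Set (Finset (α × β))) : Prop where
  strategy : ∀ i, 1 ≤ i → i ≤ l → IsCriticalStrategy A B K (H i) (crit i)
  crit_mem : ∀ i, 1 ≤ i → i < l → ∀ p ∈ crit i,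
    ∃ j, 1 ≤ j ∧ j ≤ i + 1 ∧ p ∈ H j ∧ p ∉ crit j

namespace IsCriticalSequence

variable {l : ℕ} {H crit : ℕ → Set (Finset (α × β))}

theorem exists_insert_mem (hS : IsCriticalSequence A B K l H crit) {i : ℕ} {p : Finset (α × β)}
    (hi : 1 ≤ i) (hil : i < l) (hp : p ∈ H i) (hcard : p.card < K) (x : α) :
    ∃ j, 1 ≤ j ∧ j ≤ i + 1 ∧ ∃ b, insert (x, b) p ∈ H j := by
  by_cases hc : p ∈ crit i
  · obtain ⟨j, hj, hji, hpj, hcj⟩ := hS.crit_mem i hi hil p hc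
    exact ⟨j, hj, hji, (hS.strategy j hj (by omega)).extend p hpj hcj hcard x⟩
  · exact ⟨i, hi, by omega, (hS.strategy i hi hil.le).extend p hp hc hcard x⟩

theorem dupSurvive_of_mem (hS : IsCriticalSequence A B K l H crit) (m : ℕ) :
    ∀ {i : ℕ} {p : Finset (α × β)}, 1 ≤ i → i + m ≤ l → p ∈ H i → DupSurvive A B K m p := by
  induction m with
  | zero => exact fun hi hil hp => (hS.strategy _ hi hil).isHom _ hp
  | succ m ih =>
    intro i p hi hil hp
    have hH := hS.strategy i hi (by omega)
    refine ⟨hH.isHom p hp, fun p' hp' hcard x => ?_⟩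
    obtain ⟨j, hj, hji, b, hb⟩ :=
      hS.exists_insert_mem hi (by omega) (hH.downward p hp p' hp') hcard x
    exact ⟨b, ih hj (by omega) hb⟩

end IsCriticalSequence

end CSP

theorem critical_strategy_sequence_duplicator_wins_general
    {ι α β : Type} [DecidableEq α] [DecidableEq β]
    (K l : ℕ) (hK : 2 ≤ K) (hl : 1 ≤ l)
    (A : RelStruct ι α) (B : RelStruct ι β)
    (H crit : ℕ → Set (Finset (α × β)))
    (hstrat : ∀ i, 1 ≤ i → i ≤ l → CSP.IsCriticalStrategy A B K (H i) (crit i))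
    (hseq : ∀ i, 1 ≤ i → i < l → ∀ p ∈ crit i,
      ∃ j, 1 ≤ j ∧ j ≤ i + 1 ∧ p ∈ H j ∧ p ∉ crit j) :
    CSP.DupSurvive A B K l (∅ : Finset (α × β)) := by
  have hS : CSP.IsCriticalSequence A B K l H crit := ⟨hstrat, hseq⟩
  have h1 := hstrat 1 le_rfl hl
  obtain ⟨m, rfl⟩ : ∃ m, l = m + 1 := ⟨l - 1, by omega⟩
  refine ⟨h1.isHom ∅ h1.empty_mem, fun p hp hcard x => ?_⟩
  rw [Finset.subset_empty.mp hp] at hcard ⊢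
  obtain ⟨b, hb⟩ := h1.extend ∅ h1.empty_mem (h1.empty_notMem_crit hK) hcard x
  exact ⟨b, hS.dupSurvive_of_mem m le_rfl (by omega) hb⟩

/-- if `H_1, …, H_l` is a sequence of critical strategies for Duplicator in
the existential `K`-pebble game on `A` and `B` such that for every `i < l` each critical
position of `H_i` is a non-critical position of some `H_j` with `j ≤ i+1`, then Duplicator
wins the `l`-round existential `K`-pebble game on `A` and `B`. -/
theorem critical_strategy_sequence_duplicator_wins
    {ι α β : Type} [DecidableEq α] [DecidableEq β] [Fintype α] [Fintype β]
    (K l : ℕ) (hK : 2 ≤ K) (hl : 1 ≤ l)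
    (A : RelStruct ι α) (B : RelStruct ι β)
    (H crit : ℕ → Set (Finset (α × β)))
    (hstrat : ∀ i, 1 ≤ i → i ≤ l → CSP.IsCriticalStrategy A B K (H i) (crit i))
    (hseq : ∀ i, 1 ≤ i → i < l → ∀ p ∈ crit i,
      ∃ j, 1 ≤ j ∧ j ≤ i + 1 ∧ p ∈ H j ∧ p ∉ crit j) :
    CSP.DupSurvive A B K l (∅ : Finset (α × β)) :=
  critical_strategy_sequence_duplicator_wins_general K l hK hl A B H crit hstrat hseq
end

section
/- Let k ≥ 2 and n, m ≥ 1. In the existential (k+1)-pebble game on the winning gadget WIN (with Spoiler playing on WIN_S and Duplicator on WIN_D), Spoiler wins starting from the position 'q_win on x', i.e. from the pebble position {(x^i_n, x^i_m) : i ∈ [k]}. -/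
/-- A vertex-colored (finite simple) graph on vertex type `V` with colors in `C`. -/
structure ColoredGraph (V : Type) (C : Type) where
  graph : SimpleGraph V
  color : V → C

namespace PebbleCG

variable {α β C : Type}

/-- A finite set of pairs is a partial map if it is functional. -/
def Functional (p : Finset (α × β)) : Prop :=
  ∀ ⦃x : α⦄ ⦃y y' : β⦄, (x, y) ∈ p → (x, y') ∈ p → y = y'

/-- `p` is a partial homomorphism between the vertex-colored graphs `A` and `B`:
a partial map that preserves colors and maps edges to edges. -/
def PartialHom (A : ColoredGraph α C) (B : ColoredGraph β C) (p : Finset (α × β)) : Prop :=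
  Functional p ∧
  (∀ ⦃x y⦄, (x, y) ∈ p → B.color y = A.color x) ∧
  (∀ ⦃x y x' y'⦄, (x, y) ∈ p → (x', y') ∈ p → A.graph.Adj x x' → B.graph.Adj y y')

/-- Spoiler wins the existential `K`-pebble game played on the vertex sets `S` of `A`
and `D` of `B`, starting from position `p` (after finitely many rounds): either the
position is already not a partial homomorphism, or Spoiler can pick up pebbles and place
a free pebble on some `x ∈ S` so that he wins against every answer `b ∈ D`. -/
inductive SpoilerWins [DecidableEq α] [DecidableEq β]
    (A : ColoredGraph α C) (B : ColoredGraph β C)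
    (S : Set α) (D : Set β) (K : ℕ) : Finset (α × β) → Prop
  | win {p : Finset (α × β)} :
      ¬ PartialHom A B p → SpoilerWins A B S D K p
  | move {p : Finset (α × β)} (p' : Finset (α × β)) (x : α) :
      p' ⊆ p → p'.card < K → x ∈ S →
      (∀ b ∈ D, SpoilerWins A B S D K (insert (x, b) p')) →
      SpoilerWins A B S D K p

/-- `SpoilerReach A B S D K p q`: starting from position `p`, Spoiler has a strategy in
the existential `K`-pebble game (played on the vertex sets `S` and `D`) guaranteeing
that after finitely many rounds he has either won or reached exactly the position `q`. -/
inductive SpoilerReach [DecidableEq α] [DecidableEq β]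
    (A : ColoredGraph α C) (B : ColoredGraph β C)
    (S : Set α) (D : Set β) (K : ℕ) : Finset (α × β) → Finset (α × β) → Prop
  | refl {p : Finset (α × β)} : SpoilerReach A B S D K p p
  | win {p q : Finset (α × β)} :
      ¬ PartialHom A B p → SpoilerReach A B S D K p q
  | move {p q : Finset (α × β)} (p' : Finset (α × β)) (x : α) :
      p' ⊆ p → p'.card < K → x ∈ S →
      (∀ b ∈ D, SpoilerReach A B S D K (insert (x, b) p') q) →
      SpoilerReach A B S D K p q

/-- `H` together with the set `crit ⊆ H` of critical positions is a critical strategy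
for Duplicator in the existential `K`-pebble game on the vertex-colored graphs `A`
(restricted to `S`) and `B` (restricted to `D`).  If `crit = ∅` it is a winning
strategy. -/
structure IsCriticalStrategy [DecidableEq α] [DecidableEq β]
    (A : ColoredGraph α C) (B : ColoredGraph β C)
    (S : Set α) (D : Set β) (K : ℕ)
    (H crit : Set (Finset (α × β))) : Prop where
  nonempty : H.Nonempty
  crit_subset : crit ⊆ H
  mem_SD : ∀ p ∈ H, ∀ z ∈ p, Prod.fst z ∈ S ∧ Prod.snd z ∈ D
  isHom : ∀ p ∈ H, PartialHom A B p
  crit_card : ∀ p ∈ crit, p.card = K - 1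
  downward : ∀ p ∈ H, ∀ q ⊆ p, q ∈ H
  extend : ∀ g ∈ H, g ∉ crit → g.card < K → ∀ x ∈ S, ∃ b ∈ D, insert (x, b) g ∈ H

/-- The family `H` of positions has boundary function `f` on the (Spoiler-side) boundary
`bS`: every position of `H` agrees with `f` on boundary vertices in its domain. -/
def HasBoundaryFun (H : Set (Finset (α × β))) (bS : Set α) (f : α → β) : Prop :=
  ∀ h ∈ H, ∀ z ∈ bS, ∀ y : β, (z, y) ∈ h → y = f z

end PebbleCG

/-! ### The winning gadget `WIN` (parameters `k`, `n`, `m`).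

Spoiler's side has vertices `(i, j)` with `i ∈ [1,k]`, `j ∈ [1,n]` (the input
`x`-vertices `x^i_j`) and the extra vertex `a = (0, 0)`, adjacent to `x^i_n` for all `i`.
Duplicator's side has vertices `(i, j)` with `i ∈ [1,k]`, `0 ≤ j ≤ m` (the `x`-vertices
`x^i_j`, where `x^i_0` is the special vertex) and extra vertices `aᵢ = (0, i)` for
`i ∈ [1,k]`, where `aᵢ` is adjacent to every input vertex except `x^i_m`.
Vertex `(i, j)` is colored `i`; thus the `x`-block `i` has color `i` and the extra
vertices share the new color `0`. -/

/-- Spoiler's side of the winning gadget. -/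
def winS (k n : ℕ) : ColoredGraph (ℕ × ℕ) ℕ where
  graph := SimpleGraph.fromRel (fun u v =>
    u = (0, 0) ∧ 1 ≤ v.1 ∧ v.1 ≤ k ∧ v.2 = n)
  color := fun v => v.1

/-- Duplicator's side of the winning gadget. -/
def winD (k m : ℕ) : ColoredGraph (ℕ × ℕ) ℕ where
  graph := SimpleGraph.fromRel (fun u v =>
    u.1 = 0 ∧ 1 ≤ u.2 ∧ u.2 ≤ k ∧ 1 ≤ v.1 ∧ v.1 ≤ k ∧ v.2 ≤ m ∧ ¬(v.1 = u.2 ∧ v.2 = m))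
  color := fun v => v.1

/-- The vertex set of Spoiler's side of the winning gadget. -/
def winSetS (k n : ℕ) : Set (ℕ × ℕ) :=
  {v | v = (0, 0) ∨ (1 ≤ v.1 ∧ v.1 ≤ k ∧ 1 ≤ v.2 ∧ v.2 ≤ n)}

/-- The vertex set of Duplicator's side of the winning gadget. -/
def winSetD (k m : ℕ) : Set (ℕ × ℕ) :=
  {v | (v.1 = 0 ∧ 1 ≤ v.2 ∧ v.2 ≤ k) ∨ (1 ≤ v.1 ∧ v.1 ≤ k ∧ v.2 ≤ m)}

/-!
Spoiler keeps the `k` pebbles on `x^i_n ↦ x^i_m` and places the extra pebble on `a`.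
Colors force Duplicator to answer with some `a_i`; but `a` is adjacent to `x^i_n`,
while `a_i` is not adjacent to its image `x^i_m`.
-/

namespace PebbleCG

variable {α β C : Type}

theorem not_partialHom_of_color_ne {A : ColoredGraph α C} {B : ColoredGraph β C}
    {p : Finset (α × β)} {x : α} {y : β} (hxy : (x, y) ∈ p) (hc : B.color y ≠ A.color x) :
    ¬ PartialHom A B p :=
  fun h => hc (h.2.1 hxy)

theorem not_partialHom_of_not_adj {A : ColoredGraph α C} {B : ColoredGraph β C}
    {p : Finset (α × β)} {x x' : α} {y y' : β} (hxy : (x, y) ∈ p) (hxy' : (x', y') ∈ p)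
    (hA : A.graph.Adj x x') (hB : ¬ B.graph.Adj y y') :
    ¬ PartialHom A B p :=
  fun h => hB (h.2.2 hxy hxy' hA)

theorem SpoilerWins.of_forall_not_partialHom [DecidableEq α] [DecidableEq β]
    {A : ColoredGraph α C} {B : ColoredGraph β C} {S : Set α} {D : Set β} {K : ℕ}
    {p : Finset (α × β)} {x : α} (hK : p.card < K) (hx : x ∈ S)
    (hwin : ∀ b ∈ D, ¬ PartialHom A B (insert (x, b) p)) :
    SpoilerWins A B S D K p :=
  .move p x subset_rfl hK hx fun b hb => .win (hwin b hb)

end PebbleCG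

theorem winS_adj_of_mem_Icc {k n i : ℕ} (hi : i ∈ Finset.Icc 1 k) :
    (winS k n).graph.Adj (0, 0) (i, n) := by
  obtain ⟨hi1, hik⟩ := Finset.mem_Icc.1 hi
  refine (SimpleGraph.fromRel_adj ..).2 ⟨fun h => ?_, .inl ⟨rfl, hi1, hik, rfl⟩⟩
  have := congrArg Prod.fst h
  omega

theorem winD_not_adj (k m i : ℕ) : ¬ (winD k m).graph.Adj (0, i) (i, m) := by
  rintro ⟨-, ⟨-, -, -, -, -, -, hne⟩ | ⟨-, -, -, hpos, -⟩⟩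
  · exact hne ⟨rfl, rfl⟩
  · exact absurd hpos (by simp)

theorem not_partialHom_insert_extra_winGadget {k n m : ℕ} {b : ℕ × ℕ} (hb : b ∈ winSetD k m) :
    ¬ PebbleCG.PartialHom (winS k n) (winD k m)
      (insert ((0, 0), b) ((Finset.Icc 1 k).image fun i => ((i, n), (i, m)))) := by
  have ha := Finset.mem_insert_self ((0, 0), b) ((Finset.Icc 1 k).image fun i => ((i, n), (i, m)))
  rcases hb with ⟨hb0, hi⟩ | ⟨hb1, -⟩
  · obtain ⟨_, i⟩ := b
    obtain rfl : _ = 0 := hb0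
    have hi : i ∈ Finset.Icc 1 k := Finset.mem_Icc.2 hi
    have hx : ((i, n), (i, m)) ∈ insert ((0, 0), (0, i)) _ :=
      Finset.mem_insert_of_mem (Finset.mem_image_of_mem (fun i => ((i, n), (i, m))) hi)
    exact PebbleCG.not_partialHom_of_not_adj ha hx (winS_adj_of_mem_Icc hi) (winD_not_adj k m i)
  · exact PebbleCG.not_partialHom_of_color_ne ha (by simp only [winS, winD]; omega)

theorem spoiler_wins_on_winning_gadget_general (k n m : ℕ) :
    PebbleCG.SpoilerWins (winS k n) (winD k m) (winSetS k n) (winSetD k m) (k + 1)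
      ((Finset.Icc 1 k).image fun i => ((i, n), (i, m))) :=
  PebbleCG.SpoilerWins.of_forall_not_partialHom (Finset.card_image_le.trans_lt (by simp))
    (Or.inl rfl) fun _ hb => not_partialHom_insert_extra_winGadget hb

/-- Spoiler wins the existential `(k+1)`-pebble game on the winning gadget
`WIN` starting from the position `q_win on x = {(x^i_n, x^i_m) : i ∈ [k]}`. -/
theorem spoiler_wins_on_winning_gadget (k n m : ℕ) (hk : 2 ≤ k) (hn : 1 ≤ n) (hm : 1 ≤ m) :
    PebbleCG.SpoilerWins (winS k n) (winD k m) (winSetS k n) (winSetD k m) (k + 1)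
      ((Finset.Icc 1 k).image fun i => ((i, n), (i, m))) :=
  spoiler_wins_on_winning_gadget_general k n m
end

section
/- Let k ≥ 2, n, m ≥ 1, and let q = (a,b,T) be any configuration with q ≠ q_win. Then Duplicator has a winning strategy in the existential (k+1)-pebble game on the winning gadget WIN whose boundary function on the input block is h^x_q. -/
open Classical in
/-- The map `h^x_q` for the configuration `q = (a, b, T)` on an `x`-block: it sends
`x^i_{a(i)}` to `x^i_{b(i)}` for `i ∉ T`, and every other `x^i_j` to `x^i_0`. -/
noncomputable def hxWin (a b : ℕ → ℕ) (T : Set ℕ) : ℕ × ℕ → ℕ × ℕ :=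
  fun v => if v.2 = a v.1 ∧ v.1 ∉ T then (v.1, b v.1) else (v.1, 0)

/-! Since `q ≠ q_win`, there is a block `i₀` at which `h^x_q` does not send `x^{i₀}_n` to
`x^{i₀}_m`, the only input vertex not adjacent to `a_{i₀}`. So sending `a` to `a_{i₀}` extends
`h^x_q` to a homomorphism `WIN_S → WIN_D`, and the finite restrictions of a homomorphism form a
winning strategy for Duplicator with any number of pebbles. -/

namespace PebbleCG

variable {α β C : Type}

def restrictionsOn (S : Set α) (F : α → β) : Set (Finset (α × β)) :=
  {p | ∀ ⦃x y⦄, (x, y) ∈ p → x ∈ S ∧ y = F x}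

theorem partialHom_of_mem_restrictionsOn {A : ColoredGraph α C} {B : ColoredGraph β C}
    {S : Set α} {F : α → β} (hcolor : ∀ x ∈ S, B.color (F x) = A.color x)
    (hadj : ∀ ⦃x x'⦄, x ∈ S → x' ∈ S → A.graph.Adj x x' → B.graph.Adj (F x) (F x'))
    {p : Finset (α × β)} (hp : p ∈ restrictionsOn S F) : PartialHom A B p := by
  refine ⟨fun x y y' hy hy' => (hp hy).2.trans (hp hy').2.symm, fun x y hxy => ?_,
    fun x y x' y' hxy hxy' hxx' => ?_⟩
  · obtain ⟨hx, rfl⟩ := hp hxy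
    exact hcolor x hx
  · obtain ⟨hx, rfl⟩ := hp hxy
    obtain ⟨hx', rfl⟩ := hp hxy'
    exact hadj hx hx' hxx'

theorem isCriticalStrategy_restrictionsOn [DecidableEq α] [DecidableEq β]
    {A : ColoredGraph α C} {B : ColoredGraph β C} {S : Set α} {D : Set β} (K : ℕ)
    {F : α → β} (hmaps : Set.MapsTo F S D) (hcolor : ∀ x ∈ S, B.color (F x) = A.color x)
    (hadj : ∀ ⦃x x'⦄, x ∈ S → x' ∈ S → A.graph.Adj x x' → B.graph.Adj (F x) (F x')) :
    IsCriticalStrategy A B S D K (restrictionsOn S F) ∅ where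
  nonempty := ⟨∅, by simp [restrictionsOn]⟩
  crit_subset := Set.empty_subset _
  mem_SD p hp := by
    rintro ⟨x, y⟩ hxy
    obtain ⟨hx, rfl⟩ := hp hxy
    exact ⟨hx, hmaps hx⟩
  isHom _ hp := partialHom_of_mem_restrictionsOn hcolor hadj hp
  crit_card _ hp := absurd hp (Set.notMem_empty _)
  downward _ hp _ hq _ _ hxy := hp (hq hxy)
  extend g hg _ _ x hx := ⟨F x, hmaps hx, fun x' y hxy => by
    rcases Finset.mem_insert.mp hxy with h | hxy
    · obtain ⟨rfl, rfl⟩ := Prod.mk.inj h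
      exact ⟨hx, rfl⟩
    · exact hg hxy⟩

theorem hasBoundaryFun_restrictionsOn {S bS : Set α} {F f : α → β} (hFf : Set.EqOn F f bS) :
    HasBoundaryFun (restrictionsOn S F) bS f := by
  intro h hh z hz y hy
  rw [(hh hy).2]
  exact hFf hz

end PebbleCG

section WinningGadget

variable {k n m : ℕ} {a b : ℕ → ℕ} {T : Set ℕ} {i₀ : ℕ}

@[simp]
theorem hxWin_fst (v : ℕ × ℕ) : (hxWin a b T v).1 = v.1 := by
  unfold hxWin
  split <;> rfl

theorem hxWin_snd_le {v : ℕ × ℕ} (hb : b v.1 ≤ m) : (hxWin a b T v).2 ≤ m := by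
  unfold hxWin
  split
  exacts [hb, Nat.zero_le m]

theorem hxWin_snd_ne (hm : 1 ≤ m) {i : ℕ} (hi : a i ≠ n ∨ b i ≠ m ∨ i ∈ T) :
    (hxWin a b T (i, n)).2 ≠ m := by
  unfold hxWin
  split_ifs with h
  · rcases hi with hi | hi | hi
    exacts [absurd h.1.symm hi, hi, absurd hi h.2]
  · omega

theorem winS_adj_iff {u v : ℕ × ℕ} : (winS k n).graph.Adj u v ↔
    u ≠ v ∧ ((u = (0, 0) ∧ 1 ≤ v.1 ∧ v.1 ≤ k ∧ v.2 = n) ∨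
      (v = (0, 0) ∧ 1 ≤ u.1 ∧ u.1 ≤ k ∧ u.2 = n)) := by
  simp only [winS, SimpleGraph.fromRel_adj]

theorem winD_adj_extra {i : ℕ} {v : ℕ × ℕ} (hi : 1 ≤ i ∧ i ≤ k) (hv : 1 ≤ v.1 ∧ v.1 ≤ k)
    (hvm : v.2 ≤ m) (hne : ¬(v.1 = i ∧ v.2 = m)) : (winD k m).graph.Adj (0, i) v := by
  rw [winD, SimpleGraph.fromRel_adj]
  refine ⟨fun h => by simp [← h] at hv, Or.inl ⟨rfl, hi.1, hi.2, hv.1, hv.2, hvm, hne⟩⟩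

noncomputable def winExtension (a b : ℕ → ℕ) (T : Set ℕ) (i₀ : ℕ) : ℕ × ℕ → ℕ × ℕ :=
  Function.update (hxWin a b T) (0, 0) (0, i₀)

@[simp]
theorem winExtension_fst (v : ℕ × ℕ) : (winExtension a b T i₀ v).1 = v.1 := by
  by_cases hv : v = (0, 0) <;> simp [winExtension, hv]

theorem winExtension_of_ne {v : ℕ × ℕ} (hv : v ≠ (0, 0)) :
    winExtension a b T i₀ v = hxWin a b T v :=
  Function.update_of_ne hv _ _

theorem eqOn_winExtension_hxWin :
    Set.EqOn (winExtension a b T i₀) (hxWin a b T)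
      {v : ℕ × ℕ | 1 ≤ v.1 ∧ v.1 ≤ k ∧ 1 ≤ v.2 ∧ v.2 ≤ n} := fun v hv =>
  winExtension_of_ne (by rintro rfl; exact absurd hv.1 (by norm_num))

theorem mapsTo_winExtension (hi₀ : 1 ≤ i₀ ∧ i₀ ≤ k) (hb : ∀ i, 1 ≤ i → i ≤ k → b i ≤ m) :
    Set.MapsTo (winExtension a b T i₀) (winSetS k n) (winSetD k m) := by
  rintro v (rfl | ⟨h1, hk, -, -⟩)
  · simp [winExtension, winSetD, hi₀.1, hi₀.2]
  · rw [winExtension_of_ne (by rintro rfl; exact absurd h1 (by norm_num))]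
    exact Or.inr ⟨by simpa using h1, by simpa using hk, hxWin_snd_le (hb _ h1 hk)⟩

theorem winD_adj_winExtension (hm : 1 ≤ m) (hi₀ : 1 ≤ i₀ ∧ i₀ ≤ k)
    (hq : a i₀ ≠ n ∨ b i₀ ≠ m ∨ i₀ ∈ T) {i : ℕ} (hi : 1 ≤ i ∧ i ≤ k) (hbi : b i ≤ m) :
    (winD k m).graph.Adj (winExtension a b T i₀ (0, 0)) (winExtension a b T i₀ (i, n)) := by
  rw [winExtension_of_ne (v := (i, n)) (by rintro ⟨⟩; omega)]
  refine winD_adj_extra hi₀ (by simpa using hi) (hxWin_snd_le hbi) ?_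
  rintro ⟨hii₀, hm'⟩
  simp only [hxWin_fst] at hii₀
  subst hii₀
  exact hxWin_snd_ne hm hq hm'

theorem adj_winExtension (hm : 1 ≤ m) (hi₀ : 1 ≤ i₀ ∧ i₀ ≤ k)
    (hq : a i₀ ≠ n ∨ b i₀ ≠ m ∨ i₀ ∈ T) (hb : ∀ i, 1 ≤ i → i ≤ k → b i ≤ m)
    {u v : ℕ × ℕ} (huv : (winS k n).graph.Adj u v) :
    (winD k m).graph.Adj (winExtension a b T i₀ u) (winExtension a b T i₀ v) := by
  rcases (winS_adj_iff.mp huv).2 with ⟨rfl, h1, hk, hv⟩ | ⟨rfl, h1, hk, hu⟩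
  · obtain ⟨i, j⟩ := v
    simp only at h1 hk hv
    subst hv
    exact winD_adj_winExtension hm hi₀ hq ⟨h1, hk⟩ (hb i h1 hk)
  · obtain ⟨i, j⟩ := u
    simp only at h1 hk hu
    subst hu
    exact (winD_adj_winExtension hm hi₀ hq ⟨h1, hk⟩ (hb i h1 hk)).symm

end WinningGadget

theorem duplicator_wins_on_winning_gadget_general (k n m : ℕ) (hm : 1 ≤ m)
    (a b : ℕ → ℕ) (T : Set ℕ)
    (hwf : ∀ i, 1 ≤ i → i ≤ k → 1 ≤ a i ∧ a i ≤ n ∧ 1 ≤ b i ∧ b i ≤ m)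
    (hne : ∃ i, 1 ≤ i ∧ i ≤ k ∧ (a i ≠ n ∨ b i ≠ m ∨ i ∈ T)) :
    ∃ H : Set (Finset ((ℕ × ℕ) × ℕ × ℕ)),
      PebbleCG.IsCriticalStrategy (winS k n) (winD k m) (winSetS k n) (winSetD k m)
        (k + 1) H ∅ ∧
      PebbleCG.HasBoundaryFun H {v : ℕ × ℕ | 1 ≤ v.1 ∧ v.1 ≤ k ∧ 1 ≤ v.2 ∧ v.2 ≤ n}
        (hxWin a b T) := by
  obtain ⟨i₀, hi₀1, hi₀k, hq⟩ := hne
  have hb : ∀ i, 1 ≤ i → i ≤ k → b i ≤ m := fun i h1 hk => (hwf i h1 hk).2.2.2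
  exact ⟨PebbleCG.restrictionsOn (winSetS k n) (winExtension a b T i₀),
    PebbleCG.isCriticalStrategy_restrictionsOn (k + 1)
      (mapsTo_winExtension ⟨hi₀1, hi₀k⟩ hb) (fun v _ => winExtension_fst v)
      (fun _ _ _ _ huv => adj_winExtension hm ⟨hi₀1, hi₀k⟩ hq hb huv),
    PebbleCG.hasBoundaryFun_restrictionsOn eqOn_winExtension_hxWin⟩

/-- for every configuration `q = (a, b, T)` with `q ≠ q_win`, Duplicator
has a winning strategy in the existential `(k+1)`-pebble game on the winning gadget
`WIN` whose boundary function on the input block is `h^x_q`. -/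
theorem duplicator_wins_on_winning_gadget (k n m : ℕ) (hk : 2 ≤ k) (hn : 1 ≤ n) (hm : 1 ≤ m)
    (a b : ℕ → ℕ) (T : Set ℕ) (hT : T ⊆ Set.Icc 1 k)
    (hwf : ∀ i, 1 ≤ i → i ≤ k → 1 ≤ a i ∧ a i ≤ n ∧ 1 ≤ b i ∧ b i ≤ m)
    (hne : ∃ i, 1 ≤ i ∧ i ≤ k ∧ (a i ≠ n ∨ b i ≠ m ∨ i ∈ T)) :
    ∃ H : Set (Finset ((ℕ × ℕ) × ℕ × ℕ)),
      PebbleCG.IsCriticalStrategy (winS k n) (winD k m) (winSetS k n) (winSetD k m)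
        (k + 1) H ∅ ∧
      PebbleCG.HasBoundaryFun H {v : ℕ × ℕ | 1 ≤ v.1 ∧ v.1 ≤ k ∧ 1 ≤ v.2 ∧ v.2 ≤ n}
        (hxWin a b T) :=
  duplicator_wins_on_winning_gadget_general k n m hm a b T hwf hne
end

section
/- Let k ≥ 2, n, m ≥ 1, ℓ ∈ [k], and let q be a configuration to which the right increment gadget INC^right_ℓ is applicable. Then in the existential (k+1)-pebble game on INC^right_ℓ, Spoiler can reach the position 'q^+ on y' (on the output block) from the position 'q on x' (on the input block). -/
/-! ### Blocks of vertices with two labels (input `x` = label `0`, output `y` = label `1`).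

A vertex `(lab, i, j)` is the vertex `x^i_j` (if `lab = 0`) or `y^i_j` (if `lab = 1`).
On Spoiler's side `i ∈ [1,k]`, `j ∈ [1,n]`; on Duplicator's side `i ∈ [1,k]`,
`0 ≤ j ≤ m` (with `j = 0` the special vertex).  The color of `(lab, i, j)` is
`(lab, i)`, so blocks are colored per block, matched between the two sides. -/

/-- Spoiler's vertex set: input and output blocks. -/
def blkSetS (k n : ℕ) : Set (ℕ × ℕ × ℕ) :=
  {v | v.1 ≤ 1 ∧ 1 ≤ v.2.1 ∧ v.2.1 ≤ k ∧ 1 ≤ v.2.2 ∧ v.2.2 ≤ n}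

/-- Duplicator's vertex set: input and output blocks (including the special vertices). -/
def blkSetD (k m : ℕ) : Set (ℕ × ℕ × ℕ) :=
  {v | v.1 ≤ 1 ∧ 1 ≤ v.2.1 ∧ v.2.1 ≤ k ∧ v.2.2 ≤ m}

/-- The Spoiler-side input boundary: the vertices `x^i_j`, `i ∈ [1,k]`, `j ∈ [1,n]`. -/
def blkBdryX (k n : ℕ) : Set (ℕ × ℕ × ℕ) :=
  {v | v.1 = 0 ∧ 1 ≤ v.2.1 ∧ v.2.1 ≤ k ∧ 1 ≤ v.2.2 ∧ v.2.2 ≤ n}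

/-- The Spoiler-side output boundary: the vertices `y^i_j`, `i ∈ [1,k]`, `j ∈ [1,n]`. -/
def blkBdryY (k n : ℕ) : Set (ℕ × ℕ × ℕ) :=
  {v | v.1 = 1 ∧ 1 ≤ v.2.1 ∧ v.2.1 ≤ k ∧ 1 ≤ v.2.2 ∧ v.2.2 ≤ n}

open Classical in
/-- The map `h^x_q` (resp. `h^y_q`) for a configuration `q = (a, b, T)`, acting on a
labelled block: it sends `x^i_{a(i)}` to `x^i_{b(i)}` for `i ∉ T`, and every other
`x^i_j` to the special vertex `x^i_0` (and likewise on `y`-blocks). -/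
noncomputable def hBlk (a b : ℕ → ℕ) (T : Set ℕ) : ℕ × ℕ × ℕ → ℕ × ℕ × ℕ :=
  fun v => if v.2.2 = a v.2.1 ∧ v.2.1 ∉ T then (v.1, v.2.1, b v.2.1) else (v.1, v.2.1, 0)

/-! ### The right increment gadget `INC^right_ℓ`. -/

/-- Spoiler's side of the right increment gadget: edges `{x^i_j, y^i_j}` for all
`i ∈ [1,k]`, `j ∈ [1,n]`. -/
def incRightS (k n : ℕ) : ColoredGraph (ℕ × ℕ × ℕ) (ℕ × ℕ) where
  graph := SimpleGraph.fromRel (fun u v =>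
    ∃ i j, 1 ≤ i ∧ i ≤ k ∧ 1 ≤ j ∧ j ≤ n ∧ u = (0, i, j) ∧ v = (1, i, j))
  color := fun v => (v.1, v.2.1)

/-- Duplicator's side of the right increment gadget `INC^right_ℓ`:
for `i < ℓ` the edges `{x^i_j, y^i_j}` (`0 ≤ j ≤ m`); in block `ℓ` the edges
`{x^ℓ_s, y^ℓ_{s+1}}` (`1 ≤ s ≤ m-1`), `{x^ℓ_0, y^ℓ_0}` and `{x^ℓ_m, y^ℓ_0}`;
for `i > ℓ` the edges `{x^i_m, y^i_1}` and `{x^i_j, y^i_0}` (`0 ≤ j ≤ m-1`). -/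
def incRightD (k m ℓ : ℕ) : ColoredGraph (ℕ × ℕ × ℕ) (ℕ × ℕ) where
  graph := SimpleGraph.fromRel (fun u v =>
    ∃ i j j', 1 ≤ i ∧ i ≤ k ∧ u = (0, i, j) ∧ v = (1, i, j') ∧ j ≤ m ∧ j' ≤ m ∧
      ((i < ℓ ∧ j' = j) ∨
       (i = ℓ ∧ ((1 ≤ j ∧ j < m ∧ j' = j + 1) ∨ (j = 0 ∧ j' = 0) ∨ (j = m ∧ j' = 0))) ∨
       (ℓ < i ∧ ((j = m ∧ j' = 1) ∨ (j < m ∧ j' = 0)))))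
  color := fun v => (v.1, v.2.1)

/-- `INC^right_ℓ` is applicable to the valid configuration `(a, b, ∅)`:
`b(ℓ) < m` and `b(i) = m` for all `i > ℓ`. -/
def incRightApplicable (k m ℓ : ℕ) (b : ℕ → ℕ) : Prop :=
  b ℓ < m ∧ ∀ i, ℓ < i → i ≤ k → b i = m

/-- The `b`-part of the successor configuration `q⁺` for `INC^right_ℓ`. -/
def incRightSucc (b : ℕ → ℕ) (ℓ : ℕ) : ℕ → ℕ :=
  fun i => if i < ℓ then b i else if i = ℓ then b i + 1 else 1

/-!
Duplicator's side of `INC^right_ℓ` is built so that from `x^i_{b(i)}` the only edge into the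
output block leads to `y^i_{b⁺(i)}`. Spoiler therefore moves the pebbles from the input to the
output block one index at a time: keeping the `k` pebbles of the current position, he places the
spare pebble on `y^i_{a(i)}`; the edge `{x^i_{a(i)}, y^i_{a(i)}}` forces Duplicator to answer
`y^i_{b⁺(i)}`, after which the pebble on `x^i_{a(i)}` is lifted.
-/

namespace PebbleCG

variable {α β C : Type} [DecidableEq α] [DecidableEq β]
  {A : ColoredGraph α C} {B : ColoredGraph β C} {S : Set α} {D : Set β} {K : ℕ}
  {p p' q r : Finset (α × β)} {x : α} {y : β}

theorem SpoilerReach.trans (hpq : SpoilerReach A B S D K p q)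
    (hqr : SpoilerReach A B S D K q r) : SpoilerReach A B S D K p r := by
  induction hpq with
  | refl => exact hqr
  | win hp => exact .win hp
  | move p' x hp' hcard hx _ ih => exact .move p' x hp' hcard hx fun b hb => ih b hb hqr

theorem SpoilerReach.of_forced (hp' : p' ⊆ p) (hcard : p'.card < K) (hx : x ∈ S)
    (hforced : ∀ b ∈ D, PartialHom A B (insert (x, b) p') → b = y) :
    SpoilerReach A B S D K p (insert (x, y) p') :=
  .move p' x hp' hcard hx fun b hb => by
    by_cases hhom : PartialHom A B (insert (x, b) p')
    · rw [hforced b hb hhom]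
      exact .refl
    · exact .win hhom

/-- Spoiler can lift pebbles: he re-places one of the remaining pebbles where it already lies,
and functionality forces Duplicator to do the same. -/
theorem SpoilerReach.of_subset (hp' : p' ⊆ p) (hcard : p'.card < K) (hxy : (x, y) ∈ p')
    (hx : x ∈ S) : SpoilerReach A B S D K p p' := by
  have hforced : ∀ b ∈ D, PartialHom A B (insert (x, b) p') → b = y := fun _ _ hhom =>
    hhom.1 (Finset.mem_insert_self _ _) (Finset.mem_insert_of_mem hxy)
  simpa only [Finset.insert_eq_of_mem hxy] using of_forced hp' hcard hx hforced

end PebbleCG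

section IncRightGraph

variable {k n m ℓ i j : ℕ} {b : ℕ → ℕ}

theorem incRightS_adj (hi1 : 1 ≤ i) (hik : i ≤ k) (hj1 : 1 ≤ j) (hjn : j ≤ n) :
    (incRightS k n).graph.Adj (0, i, j) (1, i, j) :=
  (SimpleGraph.fromRel_adj _ _ _).2 ⟨by simp, .inl ⟨i, j, hi1, hik, hj1, hjn, rfl, rfl⟩⟩

theorem eq_of_incRightD_adj (happ : incRightApplicable k m ℓ b) (hbi : 1 ≤ b i)
    {d : ℕ × ℕ × ℕ} (hadj : (incRightD k m ℓ).graph.Adj (0, i, b i) d) :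
    d = (1, i, incRightSucc b ℓ i) := by
  obtain ⟨hbℓ, hbm⟩ := happ
  obtain ⟨-, ⟨i', j₀, j₁, -, hik, hu, rfl, -, -, hcase⟩ | ⟨_, _, _, _, _, _, hu, _⟩⟩ :=
    (SimpleGraph.fromRel_adj _ _ _).1 hadj
  · obtain ⟨-, rfl, rfl⟩ := Prod.ext_iff.1 hu
    simp only [Prod.mk.injEq, true_and]
    rcases hcase with ⟨hiℓ, rfl⟩ | ⟨rfl, hj⟩ | ⟨hℓi, hj⟩
    · simp only [incRightSucc, if_pos hiℓ]
    · simp only [incRightSucc, lt_irrefl, if_false, if_true]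
      omega
    · have := hbm i hℓi hik
      simp only [incRightSucc, if_neg (lt_asymm hℓi), if_neg hℓi.ne']
      omega
  · simp at hu

end IncRightGraph

namespace IncRight

open PebbleCG

variable {k n m ℓ i t : ℕ} {a b : ℕ → ℕ}

def stage (k : ℕ) (a b : ℕ → ℕ) (ℓ t : ℕ) : Finset ((ℕ × ℕ × ℕ) × (ℕ × ℕ × ℕ)) :=
  (Finset.Icc 1 k).image fun i =>
    if i ≤ t then ((1, i, a i), (1, i, incRightSucc b ℓ i)) else ((0, i, a i), (0, i, b i))

theorem stage_zero :
    (Finset.Icc 1 k).image (fun i => ((0, i, a i), (0, i, b i))) = stage k a b ℓ 0 :=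
  Finset.image_congr fun i hi => by
    simp only [Finset.coe_Icc, Set.mem_Icc] at hi
    rw [if_neg (by omega)]

theorem stage_self :
    (Finset.Icc 1 k).image (fun i => ((1, i, a i), (1, i, incRightSucc b ℓ i))) =
      stage k a b ℓ k :=
  Finset.image_congr fun i hi => by
    simp only [Finset.coe_Icc, Set.mem_Icc] at hi
    rw [if_pos hi.2]

theorem output_mem_stage (hi1 : 1 ≤ i) (hik : i ≤ k) (hit : i ≤ t) :
    ((1, i, a i), (1, i, incRightSucc b ℓ i)) ∈ stage k a b ℓ t :=
  Finset.mem_image.2 ⟨i, Finset.mem_Icc.2 ⟨hi1, hik⟩, if_pos hit⟩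

theorem input_mem_stage (hi1 : 1 ≤ i) (hik : i ≤ k) (hti : t < i) :
    ((0, i, a i), (0, i, b i)) ∈ stage k a b ℓ t :=
  Finset.mem_image.2 ⟨i, Finset.mem_Icc.2 ⟨hi1, hik⟩, if_neg (by omega)⟩

theorem card_stage_lt : (stage k a b ℓ t).card < k + 1 :=
  Finset.card_image_le.trans_lt (by simp)

theorem stage_succ_subset :
    stage k a b ℓ (t + 1) ⊆
      insert ((1, t + 1, a (t + 1)), (1, t + 1, incRightSucc b ℓ (t + 1))) (stage k a b ℓ t) := by
  intro z hz
  obtain ⟨i, hi, rfl⟩ := Finset.mem_image.1 hz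
  obtain ⟨hi1, hik⟩ := Finset.mem_Icc.1 hi
  rcases lt_trichotomy i (t + 1) with hit | rfl | hti
  · rw [if_pos hit.le]
    exact Finset.mem_insert_of_mem (output_mem_stage hi1 hik (by omega))
  · simp
  · rw [if_neg (by omega)]
    exact Finset.mem_insert_of_mem (input_mem_stage hi1 hik (by omega))

variable (hwf : ∀ i, 1 ≤ i → i ≤ k → 1 ≤ a i ∧ a i ≤ n ∧ 1 ≤ b i ∧ b i ≤ m)
  (happ : incRightApplicable k m ℓ b)
include hwf happ

theorem reach_stage_succ (htk : t < k) :
    SpoilerReach (incRightS k n) (incRightD k m ℓ) (blkSetS k n) (blkSetD k m) (k + 1)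
      (stage k a b ℓ t) (stage k a b ℓ (t + 1)) := by
  obtain ⟨ha1, han, hb1, -⟩ := hwf (t + 1) (by omega) (by omega)
  have hy : ((1, t + 1, a (t + 1)) : ℕ × ℕ × ℕ) ∈ blkSetS k n := by
    simp only [blkSetS, Set.mem_ofPred_eq]
    omega
  have hforced : ∀ d ∈ blkSetD k m,
      PartialHom (incRightS k n) (incRightD k m ℓ)
        (insert ((1, t + 1, a (t + 1)), d) (stage k a b ℓ t)) →
      d = (1, t + 1, incRightSucc b ℓ (t + 1)) := fun d _ hhom =>
    eq_of_incRightD_adj happ hb1 <| hhom.2.2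
      (Finset.mem_insert_of_mem (input_mem_stage (by omega) (by omega) (by omega)))
      (Finset.mem_insert_self _ _) (incRightS_adj (by omega) (by omega) ha1 han)
  exact (SpoilerReach.of_forced subset_rfl card_stage_lt hy hforced).trans
    (SpoilerReach.of_subset stage_succ_subset card_stage_lt
      (output_mem_stage (by omega) (by omega) le_rfl) hy)

theorem reach_stage (htk : t ≤ k) :
    SpoilerReach (incRightS k n) (incRightD k m ℓ) (blkSetS k n) (blkSetD k m) (k + 1)
      (stage k a b ℓ 0) (stage k a b ℓ t) := by
  induction t with
  | zero => exact .refl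
  | succ t ih => exact (ih (by omega)).trans (reach_stage_succ hwf happ (by omega))

end IncRight

theorem spoiler_reach_inc_right_general (k n m ℓ : ℕ) (a b : ℕ → ℕ)
    (hwf : ∀ i, 1 ≤ i → i ≤ k → 1 ≤ a i ∧ a i ≤ n ∧ 1 ≤ b i ∧ b i ≤ m)
    (happ : incRightApplicable k m ℓ b) :
    PebbleCG.SpoilerReach (incRightS k n) (incRightD k m ℓ) (blkSetS k n) (blkSetD k m)
      (k + 1)
      ((Finset.Icc 1 k).image fun i => ((0, i, a i), (0, i, b i)))
      ((Finset.Icc 1 k).image fun i => ((1, i, a i), (1, i, incRightSucc b ℓ i))) := by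
  rw [IncRight.stage_zero, IncRight.stage_self]
  exact IncRight.reach_stage hwf happ le_rfl

/-- if `INC^right_ℓ` is applicable to the valid configuration `q = (a,b,∅)`,
then Spoiler can reach the position `q⁺ on y` from the position `q on x` in the
existential `(k+1)`-pebble game on `INC^right_ℓ`. -/
theorem spoiler_reach_inc_right (k n m ℓ : ℕ) (hk : 2 ≤ k) (hn : 1 ≤ n) (hm : 1 ≤ m)
    (hℓ1 : 1 ≤ ℓ) (hℓk : ℓ ≤ k) (a b : ℕ → ℕ)
    (hwf : ∀ i, 1 ≤ i → i ≤ k → 1 ≤ a i ∧ a i ≤ n ∧ 1 ≤ b i ∧ b i ≤ m)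
    (happ : incRightApplicable k m ℓ b) :
    PebbleCG.SpoilerReach (incRightS k n) (incRightD k m ℓ) (blkSetS k n) (blkSetD k m)
      (k + 1)
      ((Finset.Icc 1 k).image fun i => ((0, i, a i), (0, i, b i)))
      ((Finset.Icc 1 k).image fun i => ((1, i, a i), (1, i, incRightSucc b ℓ i))) :=
  spoiler_reach_inc_right_general k n m ℓ a b hwf happ
end

section
/- Let k ≥ 2, n, m ≥ 1, ℓ ∈ [k], and let q = (a,b,T) be a configuration. If INC^right_ℓ is applicable to q, then Duplicator has a winning strategy in the existential (k+1)-pebble game on INC^right_ℓ with boundary function h^x_q on the input block and h^y_{q^+} on the output block. If INC^right_ℓ is not applicable to q, then there exists an invalid configuration q_inv such that Duplicator has a winning strategy with boundary function h^x_q on the input block and h^y_{q_inv} on the output block. -/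
/-! Duplicator answers with a single total map: on each input block it is `h^x_q`, and on
each output block it sends `y^i_{a(i)}` to the neighbour of `x^i_{b(i)}` in the gadget, or to
the special vertex `y^i_0`. Every other vertex of block `i` goes to the special vertex, and
the special vertices `x^i_0`, `y^i_0` are always adjacent. The map is therefore a
color-preserving homomorphism, and all finite pieces of a homomorphism form a winning
strategy in the existential pebble game, for any number of pebbles. The output configuration
is `q⁺` exactly when no block has to fall back to its special vertex, i.e. when `INC^right_ℓ`
is applicable. -/

namespace PebbleCG

variable {α β C : Type}

def graphPositions (S : Set α) (f : α → β) : Set (Finset (α × β)) :=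
  {p | ∀ x y, (x, y) ∈ p → x ∈ S ∧ y = f x}

theorem isCriticalStrategy_graphPositions [DecidableEq α] [DecidableEq β]
    {A : ColoredGraph α C} {B : ColoredGraph β C} {S : Set α} {D : Set β} (K : ℕ)
    (φ : A.graph →g B.graph) (hmaps : Set.MapsTo φ S D)
    (hcolor : ∀ v ∈ S, B.color (φ v) = A.color v) :
    IsCriticalStrategy A B S D K (graphPositions S φ) ∅ where
  nonempty := ⟨∅, by simp [graphPositions]⟩
  crit_subset := Set.empty_subset _
  mem_SD p hp z hz := by
    obtain ⟨hS, hz⟩ := hp z.1 z.2 hz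
    exact ⟨hS, hz ▸ hmaps hS⟩
  isHom p hp := by
    refine ⟨fun x y y' h h' => ?_, fun x y h => ?_, fun x y x' y' h h' hadj => ?_⟩
    · rw [(hp _ _ h).2, (hp _ _ h').2]
    · rw [(hp _ _ h).2]
      exact hcolor x (hp _ _ h).1
    · rw [(hp _ _ h).2, (hp _ _ h').2]
      exact φ.map_adj hadj
  crit_card p hp := absurd hp (Set.notMem_empty p)
  downward p hp q hq x y hxy := hp x y (hq hxy)
  extend g hg _ _ x hx := ⟨φ x, hmaps hx, fun x' y' hxy => by
    obtain h | h := Finset.mem_insert.mp hxy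
    · obtain ⟨rfl, rfl⟩ := Prod.mk.inj h
      exact ⟨hx, rfl⟩
    · exact hg x' y' h⟩

theorem hasBoundaryFun_graphPositions {S bS : Set α} {f g : α → β} (h : Set.EqOn f g bS) :
    HasBoundaryFun (graphPositions S f) bS g := fun _ hp _ hz _ hzy =>
  (hp _ _ hzy).2.trans (h hz)

end PebbleCG

section Blocks

variable {a b : ℕ → ℕ} {T : Set ℕ} {l i j : ℕ}

theorem hBlk_of_ne (h : j ≠ a i) : hBlk a b T (l, i, j) = (l, i, 0) :=
  if_neg fun h' => h h'.1

theorem hBlk_of_mem (h : i ∈ T) : hBlk a b T (l, i, j) = (l, i, 0) :=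
  if_neg fun h' => h'.2 h

theorem hBlk_self_of_notMem (h : i ∉ T) : hBlk a b T (l, i, a i) = (l, i, b i) :=
  if_pos ⟨rfl, h⟩

end Blocks

noncomputable def blockPairMap (a b b' : ℕ → ℕ) (T T' : Set ℕ) (v : ℕ × ℕ × ℕ) :
    ℕ × ℕ × ℕ :=
  if v.1 = 0 then hBlk a b T v else hBlk a b' T' v

section BlockPairMap

variable {k n m : ℕ} {a b b' : ℕ → ℕ} {T T' : Set ℕ}

theorem blockPairMap_map_adj {G : SimpleGraph (ℕ × ℕ × ℕ)}
    (hzero : ∀ i, 1 ≤ i → i ≤ k → G.Adj (0, i, 0) (1, i, 0))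
    (hblock : ∀ i, 1 ≤ i → i ≤ k → G.Adj (hBlk a b T (0, i, a i)) (hBlk a b' T' (1, i, a i)))
    {u v : ℕ × ℕ × ℕ} (huv : (incRightS k n).graph.Adj u v) :
    G.Adj (blockPairMap a b b' T T' u) (blockPairMap a b b' T T' v) := by
  have hedge : ∀ i j, 1 ≤ i → i ≤ k →
      G.Adj (blockPairMap a b b' T T' (0, i, j)) (blockPairMap a b b' T T' (1, i, j)) := by
    intro i j hi1 hik
    simp only [blockPairMap, ↓reduceIte, one_ne_zero]
    by_cases hj : j = a i
    · subst hj
      exact hblock i hi1 hik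
    · rw [hBlk_of_ne hj, hBlk_of_ne hj]
      exact hzero i hi1 hik
  obtain ⟨-, ⟨i, j, hi1, hik, -, -, rfl, rfl⟩ | ⟨i, j, hi1, hik, -, -, rfl, rfl⟩⟩ :=
    SimpleGraph.fromRel_adj _ _ _ |>.mp huv
  · exact hedge i j hi1 hik
  · exact (hedge i j hi1 hik).symm

theorem blockPairMap_mapsTo (hb : ∀ i, 1 ≤ i → i ≤ k → b i ≤ m ∧ b' i ≤ m) :
    Set.MapsTo (blockPairMap a b b' T T') (blkSetS k n) (blkSetD k m) := by
  rintro ⟨l, i, j⟩ ⟨hl, hi1, hik, -, -⟩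
  have := hb i hi1 hik
  dsimp only [blockPairMap, hBlk] at hl hi1 hik ⊢
  split_ifs <;> refine ⟨hl, hi1, hik, ?_⟩ <;> dsimp only <;> omega

theorem blockPairMap_eqOn_input :
    Set.EqOn (blockPairMap a b b' T T') (hBlk a b T) (blkBdryX k n) :=
  fun _ hv => if_pos hv.1

theorem blockPairMap_eqOn_output :
    Set.EqOn (blockPairMap a b b' T T') (hBlk a b' T') (blkBdryY k n) :=
  fun _ hv => if_neg (by rw [hv.1]; exact one_ne_zero)

end BlockPairMap

/-- The blocks in which `INC^right_ℓ` has no non-special neighbour for `x^i_{b(i)}`. -/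
def incRightStuck (m ℓ : ℕ) (b : ℕ → ℕ) (i : ℕ) : Prop :=
  (i = ℓ ∧ b i = m) ∨ (ℓ < i ∧ b i < m)

def incRightFailSet (k m ℓ : ℕ) (b : ℕ → ℕ) (T : Set ℕ) : Set ℕ :=
  T ∪ {i | 1 ≤ i ∧ i ≤ k ∧ incRightStuck m ℓ b i}

section IncRight

variable {k m ℓ i j j' : ℕ} {b : ℕ → ℕ}

theorem incRightD_adj_iff :
    (incRightD k m ℓ).graph.Adj (0, i, j) (1, i, j') ↔
      1 ≤ i ∧ i ≤ k ∧ j ≤ m ∧ j' ≤ m ∧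
      ((i < ℓ ∧ j' = j) ∨
       (i = ℓ ∧ ((1 ≤ j ∧ j < m ∧ j' = j + 1) ∨ (j = 0 ∧ j' = 0) ∨ (j = m ∧ j' = 0))) ∨
       (ℓ < i ∧ ((j = m ∧ j' = 1) ∨ (j < m ∧ j' = 0)))) := by
  simp [incRightD, SimpleGraph.fromRel_adj]

theorem incRightD_adj_zero (hm : 1 ≤ m) (hi1 : 1 ≤ i) (hik : i ≤ k) :
    (incRightD k m ℓ).graph.Adj (0, i, 0) (1, i, 0) := by
  rw [incRightD_adj_iff]
  omega

theorem incRightD_adj_stuck (hi1 : 1 ≤ i) (hik : i ≤ k) (hb : b i ≤ m)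
    (h : incRightStuck m ℓ b i) : (incRightD k m ℓ).graph.Adj (0, i, b i) (1, i, 0) := by
  rw [incRightD_adj_iff]
  unfold incRightStuck at h
  omega

theorem incRightD_adj_succ (hi1 : 1 ≤ i) (hik : i ≤ k) (hb : 1 ≤ b i ∧ b i ≤ m)
    (h : ¬ incRightStuck m ℓ b i) :
    (incRightD k m ℓ).graph.Adj (0, i, b i) (1, i, incRightSucc b ℓ i) := by
  rw [incRightD_adj_iff]
  unfold incRightStuck at h
  unfold incRightSucc
  split_ifs <;> omega

theorem incRightSucc_le (hm : 1 ≤ m) (hb : b i ≤ m) (h : ¬ incRightStuck m ℓ b i) :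
    incRightSucc b ℓ i ≤ m := by
  unfold incRightStuck at h
  unfold incRightSucc
  split_ifs <;> omega

theorem one_le_incRightSucc (hb : 1 ≤ b i) : 1 ≤ incRightSucc b ℓ i := by
  unfold incRightSucc
  split_ifs <;> omega

end IncRight

section IncRightConfig

variable {k m ℓ : ℕ} {b : ℕ → ℕ} {T : Set ℕ}

theorem incRightApplicable_iff_forall_not_stuck (hℓ1 : 1 ≤ ℓ) (hℓk : ℓ ≤ k)
    (hb : ∀ i, 1 ≤ i → i ≤ k → b i ≤ m) :
    incRightApplicable k m ℓ b ↔ ∀ i, 1 ≤ i → i ≤ k → ¬ incRightStuck m ℓ b i := by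
  unfold incRightApplicable incRightStuck
  constructor
  · rintro ⟨hℓ, hgt⟩ i hi1 hik (⟨rfl, hi⟩ | ⟨hi, hbi⟩)
    · omega
    · have := hgt i hi hik
      omega
  · intro h
    have := hb ℓ hℓ1 hℓk
    refine ⟨?_, fun i hi hik => ?_⟩
    · by_contra hℓ
      exact h ℓ hℓ1 hℓk (Or.inl ⟨rfl, by omega⟩)
    · by_contra hbi
      have := hb i (by omega) hik
      exact h i (by omega) hik (Or.inr ⟨hi, by omega⟩)

theorem incRightFailSet_empty (h : ∀ i, 1 ≤ i → i ≤ k → ¬ incRightStuck m ℓ b i) :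
    incRightFailSet k m ℓ b ∅ = ∅ := by
  simp only [incRightFailSet, Set.empty_union, Set.eq_empty_iff_forall_notMem]
  exact fun i ⟨hi1, hik, hi⟩ => h i hi1 hik hi

theorem incRightFailSet_subset (hT : T ⊆ Set.Icc 1 k) :
    incRightFailSet k m ℓ b T ⊆ Set.Icc 1 k :=
  Set.union_subset hT fun _ hi => ⟨hi.1, hi.2.1⟩

theorem incRightFailSet_nonempty (hℓ1 : 1 ≤ ℓ) (hℓk : ℓ ≤ k)
    (hb : ∀ i, 1 ≤ i → i ≤ k → b i ≤ m) (h : ¬ (T = ∅ ∧ incRightApplicable k m ℓ b)) :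
    (incRightFailSet k m ℓ b T).Nonempty := by
  rw [incRightApplicable_iff_forall_not_stuck hℓ1 hℓk hb, not_and_or] at h
  obtain hT | hstuck := h
  · exact (Set.nonempty_iff_ne_empty.mpr hT).mono Set.subset_union_left
  · push Not at hstuck
    obtain ⟨i, hi1, hik, hi⟩ := hstuck
    exact ⟨i, Or.inr ⟨hi1, hik, hi⟩⟩

end IncRightConfig

theorem incRight_winning_strategy {k n m ℓ : ℕ} (hm : 1 ≤ m) (a b b' : ℕ → ℕ) (T : Set ℕ)
    (hb : ∀ i, 1 ≤ i → i ≤ k → 1 ≤ b i ∧ b i ≤ m)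
    (hb'm : ∀ i, 1 ≤ i → i ≤ k → b' i ≤ m)
    (hb' : ∀ i, 1 ≤ i → i ≤ k → i ∉ incRightFailSet k m ℓ b T → b' i = incRightSucc b ℓ i) :
    ∃ H : Set (Finset ((ℕ × ℕ × ℕ) × ℕ × ℕ × ℕ)),
      PebbleCG.IsCriticalStrategy (incRightS k n) (incRightD k m ℓ)
        (blkSetS k n) (blkSetD k m) (k + 1) H ∅ ∧
      PebbleCG.HasBoundaryFun H (blkBdryX k n) (hBlk a b T) ∧
      PebbleCG.HasBoundaryFun H (blkBdryY k n) (hBlk a b' (incRightFailSet k m ℓ b T)) := by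
  set T' := incRightFailSet k m ℓ b T
  have hblock : ∀ i, 1 ≤ i → i ≤ k → (incRightD k m ℓ).graph.Adj
      (hBlk a b T (0, i, a i)) (hBlk a b' T' (1, i, a i)) := by
    intro i hi1 hik
    by_cases hiT : i ∈ T
    · rw [hBlk_of_mem hiT, hBlk_of_mem (show i ∈ T' from Or.inl hiT)]
      exact incRightD_adj_zero hm hi1 hik
    rw [hBlk_self_of_notMem hiT]
    by_cases hstuck : incRightStuck m ℓ b i
    · rw [hBlk_of_mem (Or.inr ⟨hi1, hik, hstuck⟩)]
      exact incRightD_adj_stuck hi1 hik (hb i hi1 hik).2 hstuck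
    · have hiT' : i ∉ T' := fun h => h.elim hiT fun h => hstuck h.2.2
      rw [hBlk_self_of_notMem hiT', hb' i hi1 hik hiT']
      exact incRightD_adj_succ hi1 hik (hb i hi1 hik) hstuck
  let φ : (incRightS k n).graph →g (incRightD k m ℓ).graph :=
    ⟨blockPairMap a b b' T T', blockPairMap_map_adj (fun i => incRightD_adj_zero hm) hblock⟩
  refine ⟨PebbleCG.graphPositions (blkSetS k n) φ, ?_,
    PebbleCG.hasBoundaryFun_graphPositions blockPairMap_eqOn_input,
    PebbleCG.hasBoundaryFun_graphPositions blockPairMap_eqOn_output⟩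
  refine PebbleCG.isCriticalStrategy_graphPositions _ φ
    (blockPairMap_mapsTo fun i hi1 hik => ⟨(hb i hi1 hik).2, hb'm i hi1 hik⟩) ?_
  rintro ⟨l, i, j⟩ -
  show (incRightD k m ℓ).color (blockPairMap a b b' T T' (l, i, j)) = (l, i)
  simp only [blockPairMap, hBlk, incRightD]
  split_ifs <;> rfl

theorem duplicator_strategies_inc_right_general (k n m ℓ : ℕ)
    (hm : 1 ≤ m) (hℓ1 : 1 ≤ ℓ) (hℓk : ℓ ≤ k)
    (a b : ℕ → ℕ) (T : Set ℕ) (hT : T ⊆ Set.Icc 1 k)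
    (hwf : ∀ i, 1 ≤ i → i ≤ k → 1 ≤ a i ∧ a i ≤ n ∧ 1 ≤ b i ∧ b i ≤ m) :
    ((T = ∅ ∧ incRightApplicable k m ℓ b) →
      ∃ H : Set (Finset ((ℕ × ℕ × ℕ) × ℕ × ℕ × ℕ)),
        PebbleCG.IsCriticalStrategy (incRightS k n) (incRightD k m ℓ)
          (blkSetS k n) (blkSetD k m) (k + 1) H ∅ ∧
        PebbleCG.HasBoundaryFun H (blkBdryX k n) (hBlk a b T) ∧
        PebbleCG.HasBoundaryFun H (blkBdryY k n) (hBlk a (incRightSucc b ℓ) ∅)) ∧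
    (¬ (T = ∅ ∧ incRightApplicable k m ℓ b) →
      ∃ (a' b' : ℕ → ℕ) (T' : Set ℕ), T' ⊆ Set.Icc 1 k ∧ T'.Nonempty ∧
        (∀ i, 1 ≤ i → i ≤ k → 1 ≤ a' i ∧ a' i ≤ n ∧ 1 ≤ b' i ∧ b' i ≤ m) ∧
        ∃ H : Set (Finset ((ℕ × ℕ × ℕ) × ℕ × ℕ × ℕ)),
          PebbleCG.IsCriticalStrategy (incRightS k n) (incRightD k m ℓ)
            (blkSetS k n) (blkSetD k m) (k + 1) H ∅ ∧
          PebbleCG.HasBoundaryFun H (blkBdryX k n) (hBlk a b T) ∧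
          PebbleCG.HasBoundaryFun H (blkBdryY k n) (hBlk a' b' T')) := by
  have hb i hi1 hik : 1 ≤ b i ∧ b i ≤ m := (hwf i hi1 hik).2.2
  constructor
  · rintro ⟨rfl, happ⟩
    have hfree := (incRightApplicable_iff_forall_not_stuck hℓ1 hℓk fun i hi1 hik =>
      (hb i hi1 hik).2).mp happ
    have := incRight_winning_strategy (n := n) hm a b (incRightSucc b ℓ) ∅ hb
      (fun i hi1 hik => incRightSucc_le hm (hb i hi1 hik).2 (hfree i hi1 hik))
      fun _ _ _ _ => rfl
    rwa [incRightFailSet_empty hfree] at this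
  · intro hna
    -- capping at `m` only changes `q⁺` in the stuck blocks, which are invalidated anyway
    refine ⟨a, fun i => min (incRightSucc b ℓ i) m, incRightFailSet k m ℓ b T,
      incRightFailSet_subset hT,
      incRightFailSet_nonempty hℓ1 hℓk (fun i hi1 hik => (hb i hi1 hik).2) hna,
      fun i hi1 hik => ?_, incRight_winning_strategy hm a b _ T hb
        (fun _ _ _ => min_le_right _ _) fun i hi1 hik hiT' => ?_⟩
    · exact ⟨(hwf i hi1 hik).1, (hwf i hi1 hik).2.1,
        le_min (one_le_incRightSucc (hb i hi1 hik).1) hm, min_le_right _ _⟩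
    · exact min_eq_left (incRightSucc_le hm (hb i hi1 hik).2 fun h => hiT' (Or.inr ⟨hi1, hik, h⟩))

/-- for every configuration `q = (a,b,T)`: if `INC^right_ℓ` is applicable
to `q`, then Duplicator has a winning strategy on `INC^right_ℓ` with boundary function
`h^x_q` on the input block and `h^y_{q⁺}` on the output block; if `INC^right_ℓ` is not
applicable to `q`, then there is an invalid configuration `q_inv` such that Duplicator
has a winning strategy with boundary function `h^x_q` on the input block and
`h^y_{q_inv}` on the output block. -/
theorem duplicator_strategies_inc_right (k n m ℓ : ℕ) (hk : 2 ≤ k) (hn : 1 ≤ n)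
    (hm : 1 ≤ m) (hℓ1 : 1 ≤ ℓ) (hℓk : ℓ ≤ k)
    (a b : ℕ → ℕ) (T : Set ℕ) (hT : T ⊆ Set.Icc 1 k)
    (hwf : ∀ i, 1 ≤ i → i ≤ k → 1 ≤ a i ∧ a i ≤ n ∧ 1 ≤ b i ∧ b i ≤ m) :
    ((T = ∅ ∧ incRightApplicable k m ℓ b) →
      ∃ H : Set (Finset ((ℕ × ℕ × ℕ) × ℕ × ℕ × ℕ)),
        PebbleCG.IsCriticalStrategy (incRightS k n) (incRightD k m ℓ)
          (blkSetS k n) (blkSetD k m) (k + 1) H ∅ ∧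
        PebbleCG.HasBoundaryFun H (blkBdryX k n) (hBlk a b T) ∧
        PebbleCG.HasBoundaryFun H (blkBdryY k n) (hBlk a (incRightSucc b ℓ) ∅)) ∧
    (¬ (T = ∅ ∧ incRightApplicable k m ℓ b) →
      ∃ (a' b' : ℕ → ℕ) (T' : Set ℕ), T' ⊆ Set.Icc 1 k ∧ T'.Nonempty ∧
        (∀ i, 1 ≤ i → i ≤ k → 1 ≤ a' i ∧ a' i ≤ n ∧ 1 ≤ b' i ∧ b' i ≤ m) ∧
        ∃ H : Set (Finset ((ℕ × ℕ × ℕ) × ℕ × ℕ × ℕ)),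
          PebbleCG.IsCriticalStrategy (incRightS k n) (incRightD k m ℓ)
            (blkSetS k n) (blkSetD k m) (k + 1) H ∅ ∧
          PebbleCG.HasBoundaryFun H (blkBdryX k n) (hBlk a b T) ∧
          PebbleCG.HasBoundaryFun H (blkBdryY k n) (hBlk a' b' T')) :=
  duplicator_strategies_inc_right_general k n m ℓ hm hℓ1 hℓk a b T hT hwf
end

section
/- Let k ≥ 2, n, m ≥ 1, ℓ ∈ [k], and let q = (a,b,T) be a configuration. If INC^left_ℓ is applicable to q, then Duplicator has a winning strategy in the existential (k+1)-pebble game on INC^left_ℓ with boundary function h^x_q on the input block and h^y_{q^+} on the output block. If INC^left_ℓ is not applicable to q, then there exists an invalid configuration q_inv such that Duplicator has a winning strategy with boundary function h^x_q on the input block and h^y_{q_inv} on the output block. -/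
/-! ### The left increment gadget `INC^left_ℓ`. -/

/-- Spoiler's side of the left increment gadget `INC^left_ℓ`: edges `{x^i_j, y^i_j}` for
`i < ℓ`, `j ∈ [1,n]`; `{x^ℓ_j, y^ℓ_{j+1}}` for `1 ≤ j ≤ n-1`; and `{x^i_n, y^i_1}` for
`i > ℓ`. -/
def incLeftS (k n ℓ : ℕ) : ColoredGraph (ℕ × ℕ × ℕ) (ℕ × ℕ) where
  graph := SimpleGraph.fromRel (fun u v =>
    ∃ i j j', 1 ≤ i ∧ i ≤ k ∧ 1 ≤ j ∧ j ≤ n ∧ 1 ≤ j' ∧ j' ≤ n ∧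
      u = (0, i, j) ∧ v = (1, i, j') ∧
      ((i < ℓ ∧ j' = j) ∨ (i = ℓ ∧ j < n ∧ j' = j + 1) ∨ (ℓ < i ∧ j = n ∧ j' = 1)))
  color := fun v => (v.1, v.2.1)

/-- Duplicator's side of the left increment gadget: in every block `i ∈ [1,k]` the edges
`{x^i_m, y^i_1}` and `{x^i_j, y^i_0}` for `0 ≤ j ≤ m-1`. -/
def incLeftD (k m : ℕ) : ColoredGraph (ℕ × ℕ × ℕ) (ℕ × ℕ) where
  graph := SimpleGraph.fromRel (fun u v =>
    ∃ i j j', 1 ≤ i ∧ i ≤ k ∧ u = (0, i, j) ∧ v = (1, i, j') ∧ j ≤ m ∧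
      ((j = m ∧ j' = 1) ∨ (j < m ∧ j' = 0)))
  color := fun v => (v.1, v.2.1)

/-- `INC^left_ℓ` is applicable to the valid configuration `(a, b, ∅)`:
`a(ℓ) < n`, `a(i) = n` for all `i > ℓ`, and `b(i) = m` for all `i ∈ [1,k]`. -/
def incLeftApplicable (k n m ℓ : ℕ) (a b : ℕ → ℕ) : Prop :=
  a ℓ < n ∧ (∀ i, ℓ < i → i ≤ k → a i = n) ∧ (∀ i, 1 ≤ i → i ≤ k → b i = m)

/-- The `a`-part of the successor configuration `q⁺` for `INC^left_ℓ`
(its `b`-part is constantly `1`). -/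
def incLeftSucc (a : ℕ → ℕ) (ℓ : ℕ) : ℕ → ℕ :=
  fun i => if i < ℓ then a i else if i = ℓ then a i + 1 else 1

/-!
Duplicator answers according to a single map from Spoiler's side to Duplicator's side:
`h^x_q` on the input block and `h^y_{q'}` on the output block, where `q'` has `b' ≡ 1`,
`a' = a⁺` (kept inside `[1, n]`), and blocks exactly the indices `i` at which the increment
cannot be carried out (`i ∈ T`, `b(i) < m`, `i = ℓ` with `a(ℓ) = n`, or `i > ℓ` with
`a(i) < n`). Since Duplicator's block `i` joins `x^i_c` to `y^i_1` iff `c = m` and to `y^i_0`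
otherwise, this map is a homomorphism as soon as, along every Spoiler edge `{x^i_j, y^i_j'}`,
`x^i_j` goes to `x^i_m` exactly when `y^i_j'` goes to `y^i_1`; this is checked block by block.
The restrictions of a homomorphism form a winning strategy for any number of pebbles, and `q'`
is the successor `q⁺` precisely when no index is blocked, i.e. when `INC^left_ℓ` is applicable
to `q`.
-/

namespace PebbleCG

variable {α β C : Type}

def restrictions (S : Set α) (f : α → β) : Set (Finset (α × β)) :=
  {p | ∀ z ∈ p, z.1 ∈ S ∧ z.2 = f z.1}

theorem isCriticalStrategy_restrictions [DecidableEq α] [DecidableEq β]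
    {A : ColoredGraph α C} {B : ColoredGraph β C} {S : Set α} {D : Set β} (K : ℕ)
    {f : α → β} (hSD : Set.MapsTo f S D) (hcol : ∀ x ∈ S, B.color (f x) = A.color x)
    (hadj : ∀ x ∈ S, ∀ y ∈ S, A.graph.Adj x y → B.graph.Adj (f x) (f y)) :
    IsCriticalStrategy A B S D K (restrictions S f) ∅ where
  nonempty := ⟨∅, by simp [restrictions]⟩
  crit_subset := Set.empty_subset _
  mem_SD p hp z hz := ⟨(hp z hz).1, (hp z hz).2 ▸ hSD (hp z hz).1⟩
  isHom p hp := by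
    have hp' {x y} (h : (x, y) ∈ p) : x ∈ S ∧ y = f x := hp _ h
    refine ⟨fun x y y' hy hy' => (hp' hy).2.trans (hp' hy').2.symm, fun x y hy => ?_,
      fun x y x' y' hy hy' hxx' => ?_⟩
    · obtain ⟨hx, rfl⟩ := hp' hy
      exact hcol x hx
    · obtain ⟨hx, rfl⟩ := hp' hy
      obtain ⟨hx', rfl⟩ := hp' hy'
      exact hadj x hx x' hx' hxx'
  crit_card p hp := absurd hp (Set.notMem_empty p)
  downward p hp q hq z hz := hp z (hq hz)
  extend g hg _ _ x hx := ⟨f x, hSD hx, by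
    intro z hz
    rcases Finset.mem_insert.mp hz with rfl | hz
    · exact ⟨hx, rfl⟩
    · exact hg z hz⟩

theorem hasBoundaryFun_restrictions {S bS : Set α} {f g : α → β} (hfg : Set.EqOn f g bS) :
    HasBoundaryFun (restrictions S f) bS g :=
  fun _ hp _ hz _ hy => (hp _ hy).2.trans (hfg hz)

end PebbleCG

theorem hBlk_fst (a b : ℕ → ℕ) (T : Set ℕ) (v : ℕ × ℕ × ℕ) : (hBlk a b T v).1 = v.1 := by
  unfold hBlk; split_ifs <;> rfl

theorem hBlk_snd_fst (a b : ℕ → ℕ) (T : Set ℕ) (v : ℕ × ℕ × ℕ) :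
    (hBlk a b T v).2.1 = v.2.1 := by
  unfold hBlk; split_ifs <;> rfl

theorem hBlk_mem_blkSetD {k n m : ℕ} {a b : ℕ → ℕ} (T : Set ℕ)
    (hb : ∀ i, 1 ≤ i → i ≤ k → b i ≤ m) {v : ℕ × ℕ × ℕ} (hv : v ∈ blkSetS k n) :
    hBlk a b T v ∈ blkSetD k m := by
  obtain ⟨hl, hi1, hik, -, -⟩ := hv
  unfold hBlk
  split_ifs
  exacts [⟨hl, hi1, hik, hb _ hi1 hik⟩, ⟨hl, hi1, hik, Nat.zero_le m⟩]

theorem incLeftD_adj {k m i c c' : ℕ} (hi1 : 1 ≤ i) (hik : i ≤ k) (hcm : c ≤ m)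
    (h : (c = m ∧ c' = 1) ∨ (c < m ∧ c' = 0)) :
    (incLeftD k m).graph.Adj (0, i, c) (1, i, c') := by
  simp only [incLeftD, SimpleGraph.fromRel_adj]
  exact ⟨by simp, Or.inl ⟨i, c, c', hi1, hik, rfl, rfl, hcm, h⟩⟩

theorem incLeftD_adj_hBlk {k m i j j' : ℕ} {a b a' : ℕ → ℕ} {T T' : Set ℕ} (hm : 1 ≤ m)
    (hi1 : 1 ≤ i) (hik : i ≤ k) (hb : b i ≤ m)
    (h : (j = a i ∧ i ∉ T ∧ b i = m) ↔ (j' = a' i ∧ i ∉ T')) :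
    (incLeftD k m).graph.Adj (hBlk a b T (0, i, j)) (hBlk a' (fun _ => 1) T' (1, i, j')) := by
  simp only [hBlk]
  split_ifs with hx hy hy
  · exact incLeftD_adj hi1 hik hb (Or.inl ⟨by tauto, rfl⟩)
  · exact incLeftD_adj hi1 hik hb (Or.inr ⟨lt_of_le_of_ne hb (by tauto), rfl⟩)
  · exact absurd (h.mpr hy) (by tauto)
  · exact incLeftD_adj hi1 hik (Nat.zero_le m) (Or.inr ⟨hm, rfl⟩)

/-- Equal to `incLeftSucc a ℓ` when `a ℓ < n`; otherwise block `ℓ` is blocked in the output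
configuration and its entry is only kept inside `[1, n]`. -/
def incLeftOutA (n ℓ : ℕ) (a : ℕ → ℕ) : ℕ → ℕ :=
  fun i => if i < ℓ then a i else if i = ℓ ∧ a ℓ < n then a ℓ + 1 else 1

def incLeftBad (k n m ℓ : ℕ) (a b : ℕ → ℕ) (T : Set ℕ) : Set ℕ :=
  {i ∈ Set.Icc 1 k | i ∈ T ∨ b i ≠ m ∨ (i = ℓ ∧ n ≤ a ℓ) ∨ (ℓ < i ∧ a i ≠ n)}

theorem incLeft_active_iff {k n m ℓ i j j' : ℕ} {a b : ℕ → ℕ} {T : Set ℕ}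
    (hi1 : 1 ≤ i) (hik : i ≤ k)
    (hdir : (i < ℓ ∧ j' = j) ∨ (i = ℓ ∧ j < n ∧ j' = j + 1) ∨ (ℓ < i ∧ j = n ∧ j' = 1)) :
    (j = a i ∧ i ∉ T ∧ b i = m) ↔
      (j' = incLeftOutA n ℓ a i ∧ i ∉ incLeftBad k n m ℓ a b T) := by
  rcases hdir with ⟨hlt, rfl⟩ | ⟨rfl, hjn, rfl⟩ | ⟨hgt, rfl, rfl⟩ <;>
    grind [incLeftOutA, incLeftBad]

noncomputable def incLeftMap (k n m ℓ : ℕ) (a b : ℕ → ℕ) (T : Set ℕ) :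
    ℕ × ℕ × ℕ → ℕ × ℕ × ℕ :=
  fun v => if v.1 = 0 then hBlk a b T v
    else hBlk (incLeftOutA n ℓ a) (fun _ => 1) (incLeftBad k n m ℓ a b T) v

theorem incLeftMap_adj {k n m ℓ : ℕ} {a b : ℕ → ℕ} (T : Set ℕ) (hm : 1 ≤ m)
    (hb : ∀ i, 1 ≤ i → i ≤ k → b i ≤ m) {u v : ℕ × ℕ × ℕ}
    (huv : (incLeftS k n ℓ).graph.Adj u v) :
    (incLeftD k m).graph.Adj (incLeftMap k n m ℓ a b T u) (incLeftMap k n m ℓ a b T v) := by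
  have hedge : ∀ i j j', 1 ≤ i → i ≤ k →
      ((i < ℓ ∧ j' = j) ∨ (i = ℓ ∧ j < n ∧ j' = j + 1) ∨ (ℓ < i ∧ j = n ∧ j' = 1)) →
      (incLeftD k m).graph.Adj (incLeftMap k n m ℓ a b T (0, i, j))
        (incLeftMap k n m ℓ a b T (1, i, j')) := fun i j j' hi1 hik hdir =>
    incLeftD_adj_hBlk hm hi1 hik (hb i hi1 hik) (incLeft_active_iff hi1 hik hdir)
  simp only [incLeftS, SimpleGraph.fromRel_adj] at huv
  obtain ⟨-, ⟨i, j, j', hi1, hik, -, -, -, -, rfl, rfl, hdir⟩ |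
    ⟨i, j, j', hi1, hik, -, -, -, -, rfl, rfl, hdir⟩⟩ := huv
  exacts [hedge i j j' hi1 hik hdir, (hedge i j j' hi1 hik hdir).symm]

theorem exists_incLeft_strategy {k n m ℓ : ℕ} {a b : ℕ → ℕ} (T : Set ℕ) (K : ℕ) (hm : 1 ≤ m)
    (hb : ∀ i, 1 ≤ i → i ≤ k → b i ≤ m) :
    ∃ H : Set (Finset ((ℕ × ℕ × ℕ) × ℕ × ℕ × ℕ)),
      PebbleCG.IsCriticalStrategy (incLeftS k n ℓ) (incLeftD k m)
        (blkSetS k n) (blkSetD k m) K H ∅ ∧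
      PebbleCG.HasBoundaryFun H (blkBdryX k n) (hBlk a b T) ∧
      PebbleCG.HasBoundaryFun H (blkBdryY k n)
        (hBlk (incLeftOutA n ℓ a) (fun _ => 1) (incLeftBad k n m ℓ a b T)) := by
  set f := incLeftMap k n m ℓ a b T
  have hSD : Set.MapsTo f (blkSetS k n) (blkSetD k m) := fun v hv => by
    simp only [f, incLeftMap]
    split_ifs
    exacts [hBlk_mem_blkSetD T hb hv, hBlk_mem_blkSetD _ (fun _ _ _ => hm) hv]
  have hcol : ∀ v, (incLeftD k m).color (f v) = (incLeftS k n ℓ).color v := fun v => by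
    simp only [f, incLeftMap, incLeftD, incLeftS]
    split_ifs <;> rw [hBlk_fst, hBlk_snd_fst]
  refine ⟨PebbleCG.restrictions (blkSetS k n) f,
    PebbleCG.isCriticalStrategy_restrictions K hSD (fun v _ => hcol v)
      (fun u _ v _ huv => incLeftMap_adj T hm hb huv),
    PebbleCG.hasBoundaryFun_restrictions fun v hv => if_pos hv.1,
    PebbleCG.hasBoundaryFun_restrictions fun v hv => if_neg (hv.1 ▸ one_ne_zero)⟩

theorem incLeftOutA_eq_incLeftSucc {n ℓ : ℕ} {a : ℕ → ℕ} (h : a ℓ < n) :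
    incLeftOutA n ℓ a = incLeftSucc a ℓ := by
  funext i
  grind [incLeftOutA, incLeftSucc]

theorem incLeftOutA_mem_Icc {n ℓ i : ℕ} {a : ℕ → ℕ} (hn : 1 ≤ n) (ha : 1 ≤ a i ∧ a i ≤ n) :
    1 ≤ incLeftOutA n ℓ a i ∧ incLeftOutA n ℓ a i ≤ n := by
  grind [incLeftOutA]

theorem incLeftBad_eq_empty_iff {k n m ℓ : ℕ} {a b : ℕ → ℕ} {T : Set ℕ}
    (hT : T ⊆ Set.Icc 1 k) (hℓ1 : 1 ≤ ℓ) (hℓk : ℓ ≤ k) :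
    incLeftBad k n m ℓ a b T = ∅ ↔ T = ∅ ∧ incLeftApplicable k n m ℓ a b := by
  simp only [Set.eq_empty_iff_forall_notMem, incLeftBad, incLeftApplicable, Set.mem_ofPred_eq,
    Set.mem_Icc]
  constructor
  · intro h
    refine ⟨fun i hi => h i ⟨hT hi, Or.inl hi⟩, ?_, fun i hgt hik => ?_, fun i hi1 hik => ?_⟩
    all_goals grind
  · rintro ⟨hT0, haℓ, hgt, hbm⟩ i ⟨⟨hi1, hik⟩, hbad⟩
    grind

theorem duplicator_strategies_inc_left_general (k n m ℓ : ℕ) (hn : 1 ≤ n)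
    (hm : 1 ≤ m) (hℓ1 : 1 ≤ ℓ) (hℓk : ℓ ≤ k)
    (a b : ℕ → ℕ) (T : Set ℕ) (hT : T ⊆ Set.Icc 1 k)
    (hwf : ∀ i, 1 ≤ i → i ≤ k → 1 ≤ a i ∧ a i ≤ n ∧ 1 ≤ b i ∧ b i ≤ m) :
    ((T = ∅ ∧ incLeftApplicable k n m ℓ a b) →
      ∃ H : Set (Finset ((ℕ × ℕ × ℕ) × ℕ × ℕ × ℕ)),
        PebbleCG.IsCriticalStrategy (incLeftS k n ℓ) (incLeftD k m)
          (blkSetS k n) (blkSetD k m) (k + 1) H ∅ ∧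
        PebbleCG.HasBoundaryFun H (blkBdryX k n) (hBlk a b T) ∧
        PebbleCG.HasBoundaryFun H (blkBdryY k n) (hBlk (incLeftSucc a ℓ) (fun _ => 1) ∅)) ∧
    (¬ (T = ∅ ∧ incLeftApplicable k n m ℓ a b) →
      ∃ (a' b' : ℕ → ℕ) (T' : Set ℕ), T' ⊆ Set.Icc 1 k ∧ T'.Nonempty ∧
        (∀ i, 1 ≤ i → i ≤ k → 1 ≤ a' i ∧ a' i ≤ n ∧ 1 ≤ b' i ∧ b' i ≤ m) ∧
        ∃ H : Set (Finset ((ℕ × ℕ × ℕ) × ℕ × ℕ × ℕ)),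
          PebbleCG.IsCriticalStrategy (incLeftS k n ℓ) (incLeftD k m)
            (blkSetS k n) (blkSetD k m) (k + 1) H ∅ ∧
          PebbleCG.HasBoundaryFun H (blkBdryX k n) (hBlk a b T) ∧
          PebbleCG.HasBoundaryFun H (blkBdryY k n) (hBlk a' b' T')) := by
  have hb : ∀ i, 1 ≤ i → i ≤ k → b i ≤ m := fun i hi1 hik => (hwf i hi1 hik).2.2.2
  have hstrat := exists_incLeft_strategy (ℓ := ℓ) (n := n) (a := a) T (k + 1) hm hb
  have hbad := incLeftBad_eq_empty_iff (n := n) (m := m) (a := a) (b := b) hT hℓ1 hℓk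
  refine ⟨fun happ => ?_, fun hnot => ?_⟩
  · rwa [hbad.mpr happ, incLeftOutA_eq_incLeftSucc happ.2.1] at hstrat
  · refine ⟨incLeftOutA n ℓ a, fun _ => 1, incLeftBad k n m ℓ a b T, fun i hi => hi.1,
      Set.nonempty_iff_ne_empty.mpr (mt hbad.mp hnot), fun i hi1 hik => ?_, hstrat⟩
    have ha := incLeftOutA_mem_Icc (ℓ := ℓ) hn ⟨(hwf i hi1 hik).1, (hwf i hi1 hik).2.1⟩
    exact ⟨ha.1, ha.2, le_rfl, hm⟩

/-- for every configuration `q = (a,b,T)`: if `INC^left_ℓ` is applicable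
to `q`, then Duplicator has a winning strategy on `INC^left_ℓ` with boundary function
`h^x_q` on the input block and `h^y_{q⁺}` on the output block; if `INC^left_ℓ` is not
applicable to `q`, then there is an invalid configuration `q_inv` such that Duplicator
has a winning strategy with boundary function `h^x_q` on the input block and
`h^y_{q_inv}` on the output block. -/
theorem duplicator_strategies_inc_left (k n m ℓ : ℕ) (hk : 2 ≤ k) (hn : 1 ≤ n)
    (hm : 1 ≤ m) (hℓ1 : 1 ≤ ℓ) (hℓk : ℓ ≤ k)
    (a b : ℕ → ℕ) (T : Set ℕ) (hT : T ⊆ Set.Icc 1 k)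
    (hwf : ∀ i, 1 ≤ i → i ≤ k → 1 ≤ a i ∧ a i ≤ n ∧ 1 ≤ b i ∧ b i ≤ m) :
    ((T = ∅ ∧ incLeftApplicable k n m ℓ a b) →
      ∃ H : Set (Finset ((ℕ × ℕ × ℕ) × ℕ × ℕ × ℕ)),
        PebbleCG.IsCriticalStrategy (incLeftS k n ℓ) (incLeftD k m)
          (blkSetS k n) (blkSetD k m) (k + 1) H ∅ ∧
        PebbleCG.HasBoundaryFun H (blkBdryX k n) (hBlk a b T) ∧
        PebbleCG.HasBoundaryFun H (blkBdryY k n) (hBlk (incLeftSucc a ℓ) (fun _ => 1) ∅)) ∧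
    (¬ (T = ∅ ∧ incLeftApplicable k n m ℓ a b) →
      ∃ (a' b' : ℕ → ℕ) (T' : Set ℕ), T' ⊆ Set.Icc 1 k ∧ T'.Nonempty ∧
        (∀ i, 1 ≤ i → i ≤ k → 1 ≤ a' i ∧ a' i ≤ n ∧ 1 ≤ b' i ∧ b' i ≤ m) ∧
        ∃ H : Set (Finset ((ℕ × ℕ × ℕ) × ℕ × ℕ × ℕ)),
          PebbleCG.IsCriticalStrategy (incLeftS k n ℓ) (incLeftD k m)
            (blkSetS k n) (blkSetD k m) (k + 1) H ∅ ∧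
          PebbleCG.HasBoundaryFun H (blkBdryX k n) (hBlk a b T) ∧
          PebbleCG.HasBoundaryFun H (blkBdryY k n) (hBlk a' b' T')) :=
  duplicator_strategies_inc_left_general k n m ℓ hn hm hℓ1 hℓk a b T hT hwf
end

section
/- For all integers k ≥ 2, n, m ≥ 1 and every valid configuration q = (a,b,∅) there exists a gadget INIT, i.e. a pair of finite vertex-colored graphs (INIT_S, INIT_D), whose boundary consists of an output block of y-vertices y^i_j (Spoiler side: i ∈ [k], j ∈ [n]; Duplicator side: i ∈ [k], j ∈ {0,…,m}; colored per block, matched between the two sides) such that in the existential (k+1)-pebble game on (INIT_S, INIT_D): (i) Spoiler can reach the position 'q on y' from the empty position; (ii) Duplicator has a winning strategy I with boundary function h^y_q on the output block; and (iii) for every configuration q' (valid or invalid) Duplicator has a critical strategy I_{q'} with boundary function h^y_{q'} on the output block such that crit(I_{q'}) ⊆ I. -/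
/-- The Spoiler-side output `y`-block: vertices `y^i_j = (1, i, j)`, `i ∈ [1,k]`,
`j ∈ [1,n]`. -/
def initBdryYS (k n : ℕ) : Set (ℕ × ℕ × ℕ) :=
  {v | v.1 = 1 ∧ 1 ≤ v.2.1 ∧ v.2.1 ≤ k ∧ 1 ≤ v.2.2 ∧ v.2.2 ≤ n}

/-- The Duplicator-side output `y`-block: vertices `y^i_j = (1, i, j, 0)`, `i ∈ [1,k]`,
`0 ≤ j ≤ m`. -/
def initBdryYD (k m : ℕ) : Set (ℕ × ℕ × ℕ × ℕ) :=
  {v | v.1 = 1 ∧ 1 ≤ v.2.1 ∧ v.2.1 ≤ k ∧ v.2.2.1 ≤ m ∧ v.2.2.2 = 0}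

open Classical in
/-- The map `h^y_q` for the configuration `q = (a, b, T)` on the output block: it sends
`y^i_{a(i)}` to `y^i_{b(i)}` for `i ∉ T`, and every other `y^i_j` to `y^i_0`. -/
noncomputable def hyInit (a b : ℕ → ℕ) (T : Set ℕ) : ℕ × ℕ × ℕ → ℕ × ℕ × ℕ × ℕ :=
  fun v => if v.2.2 = a v.2.1 ∧ v.2.1 ∉ T then (v.1, v.2.1, b v.2.1, 0)
           else (v.1, v.2.1, 0, 0)

/-!
On Spoiler's side, `x = zS 0` and `z₁, …, z_{k+1}` (`zS l`) form a clique, and `x` is adjacent to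
every `y^i_{a(i)}`. On Duplicator's side, column `l ≤ k + 1` (the color of `zS l`) consists of the
vertices `zD l c`, `c ≤ k`; vertices in different columns are adjacent iff their values differ,
except that `zD 0 0` ("`x` is true") is adjacent to all of them. Towards the output block, `zD 0 0`
is adjacent to the `y^i_{b(i)}` only, and every guess `zD 0 c`, `c ≥ 1`, to the whole block.

Spoiler pebbles `z₁, …, z_{k+1}`: their images carry pairwise distinct values in `{0, …, k}`, hence
all of them. He moves the pebble from the `z` of value `0` to `x`; a guess `c` would clash with the
`z` of value `c`, so `x` goes to `zD 0 0`, and then each `y^i_{a(i)}` must go to `y^i_{b(i)}`.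

Duplicator can give a newly pebbled `z` a value unused by the at most `k` other pebbles. Sending `x`
to `zD 0 0` this wins; sending `x` to a guess it wins unless `k` pebbled `z`'s use up all values
`1, …, k`. These critical positions pebble neither `x` nor the output block, so they also belong to
the winning strategy.
-/

namespace PebbleCG

variable {α β C : Type} {A : ColoredGraph α C} {B : ColoredGraph β C}

theorem PartialHom.mono {p q : Finset (α × β)} (hp : PartialHom A B p) (hqp : q ⊆ p) :
    PartialHom A B q :=
  ⟨fun _ _ _ h₁ h₂ => hp.1 (hqp h₁) (hqp h₂), fun _ _ h => hp.2.1 (hqp h),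
    fun _ _ _ _ h₁ h₂ => hp.2.2 (hqp h₁) (hqp h₂)⟩

theorem partialHom_empty : PartialHom A B (∅ : Finset (α × β)) := by
  simp [PartialHom, Functional]

theorem PartialHom.insert [DecidableEq α] [DecidableEq β] {p : Finset (α × β)} {x : α} {y : β}
    (hp : PartialHom A B p) (hx : ∀ y', (x, y') ∉ p) (hcol : B.color y = A.color x)
    (hadj : ∀ q ∈ p, A.graph.Adj x q.1 → B.graph.Adj y q.2) :
    PartialHom A B (insert (x, y) p) := by
  obtain ⟨hfun, hcolp, hadjp⟩ := hp
  refine ⟨?_, ?_, ?_⟩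
  · intro x₀ y₁ y₂ h₁ h₂
    simp only [Finset.mem_insert, Prod.mk.injEq] at h₁ h₂
    rcases h₁ with ⟨rfl, rfl⟩ | h₁ <;> rcases h₂ with ⟨h, rfl⟩ | h₂
    · rfl
    · exact absurd h₂ (hx _)
    · exact absurd h₁ (h ▸ hx _)
    · exact hfun h₁ h₂
  · intro x₀ y₀ h
    rcases Finset.mem_insert.1 h with h | h
    · cases h; exact hcol
    · exact hcolp h
  · intro x₁ y₁ x₂ y₂ h₁ h₂ hA
    rcases Finset.mem_insert.1 h₁ with h₁ | h₁ <;> rcases Finset.mem_insert.1 h₂ with h₂ | h₂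
    · cases h₁; cases h₂; exact absurd hA A.graph.irrefl
    · cases h₁; exact hadj _ h₂ hA
    · cases h₂; exact (hadj _ h₁ hA.symm).symm
    · exact hadjp h₁ h₂ hA

theorem SpoilerReach.of_partialHom [DecidableEq α] [DecidableEq β] {S : Set α} {D : Set β}
    {K : ℕ} {p q : Finset (α × β)}
    (h : PartialHom A B p → SpoilerReach A B S D K p q) : SpoilerReach A B S D K p q := by
  by_cases hp : PartialHom A B p
  · exact h hp
  · exact .win hp

end PebbleCG

namespace InitGadget

open PebbleCG

abbrev VS := ℕ × ℕ × ℕ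
abbrev VD := ℕ × ℕ × ℕ × ℕ
abbrev Pos := Finset (VS × VD)

def zS (l : ℕ) : VS := (0, l, 0)
def yS (i j : ℕ) : VS := (1, i, j)
def zD (l c : ℕ) : VD := (0, l, c, 0)
def yD (i j : ℕ) : VD := (1, i, j, 0)

section definitions

variable (k n m : ℕ) (a b : ℕ → ℕ)

def vertsS : Set VS := {v | v.1 = 0 ∧ v.2.1 ≤ k + 1 ∧ v.2.2 = 0} ∪ initBdryYS k n

def vertsD : Set VD :=
  {v | v.1 = 0 ∧ v.2.1 ≤ k + 1 ∧ v.2.2.1 ≤ k ∧ v.2.2.2 = 0} ∪ initBdryYD k m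

def adjRelS (u v : VS) : Prop :=
  u ∈ vertsS k n ∧ v ∈ vertsS k n ∧ (u.1 = 0 ∧ v.1 = 0 ∨ u = zS 0 ∧ v.1 = 1 ∧ v.2.2 = a v.2.1)

def adjRelD (u v : VD) : Prop :=
  u ∈ vertsD k m ∧ v ∈ vertsD k m ∧
    (u.1 = 0 ∧ v.1 = 0 ∧ u.2.1 ≠ v.2.1 ∧ (u.2.2.1 ≠ v.2.2.1 ∨ u = zD 0 0) ∨
      u.1 = 0 ∧ u.2.1 = 0 ∧ v.1 = 1 ∧ (u.2.2.1 ≠ 0 ∨ v.2.2.1 = b v.2.1))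

def gadgetS : ColoredGraph VS (ℕ × ℕ) :=
  ⟨SimpleGraph.fromRel (adjRelS k n a), fun v => (v.1, v.2.1)⟩

def gadgetD : ColoredGraph VD (ℕ × ℕ) :=
  ⟨SimpleGraph.fromRel (adjRelD k m b), fun v => (v.1, v.2.1)⟩

end definitions

variable {k n m : ℕ} {a b : ℕ → ℕ}

section vertices

variable {l c i : ℕ}

theorem zS_mem (hl : l ≤ k + 1) : zS l ∈ vertsS k n := Or.inl ⟨rfl, hl, rfl⟩

theorem yS_mem {j : ℕ} (hi : 1 ≤ i) (hik : i ≤ k) (hj : 1 ≤ j) (hjn : j ≤ n) :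
    yS i j ∈ vertsS k n :=
  Or.inr ⟨rfl, hi, hik, hj, hjn⟩

theorem zD_mem (hl : l ≤ k + 1) (hc : c ≤ k) : zD l c ∈ vertsD k m := Or.inl ⟨rfl, hl, hc, rfl⟩

theorem mem_vertsS {v : VS} (hv : v ∈ vertsS k n) :
    (∃ l ≤ k + 1, v = zS l) ∨ v ∈ initBdryYS k n := by
  rcases hv with ⟨h₁, h₂, h₃⟩ | hv
  · exact Or.inl ⟨v.2.1, h₂, by simp [zS, Prod.ext_iff, h₁, h₃]⟩
  · exact Or.inr hv

theorem eq_zD_of_mem {t : VD} (ht : t ∈ vertsD k m) (hcol : (t.1, t.2.1) = (0, l)) :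
    ∃ c ≤ k, t = zD l c := by
  simp only [Prod.mk.injEq] at hcol
  rcases ht with ⟨-, -, hc, h₄⟩ | ⟨h₁, -⟩
  · exact ⟨t.2.2.1, hc, by simp [zD, Prod.ext_iff, hcol, h₄]⟩
  · omega

theorem eq_yD_of_mem {t : VD} (ht : t ∈ vertsD k m) (hcol : (t.1, t.2.1) = (1, i)) :
    ∃ j ≤ m, t = yD i j := by
  simp only [Prod.mk.injEq] at hcol
  rcases ht with ⟨h₁, -⟩ | ⟨-, -, -, hj, h₄⟩
  · omega
  · exact ⟨t.2.2.1, hj, by simp [yD, Prod.ext_iff, hcol, h₄]⟩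

theorem vertsS_finite : (vertsS k n).Finite :=
  (Set.finite_Iic ((1, k + 1, n) : VS)).subset fun v hv => by
    rcases hv with ⟨h₁, h₂, h₃⟩ | ⟨h₁, -, h₂, -, h₃⟩ <;> simp [Prod.le_def] <;> omega

theorem vertsD_finite : (vertsD k m).Finite :=
  (Set.finite_Iic ((1, k + 1, m + k, 0) : VD)).subset fun v hv => by
    rcases hv with ⟨h₁, h₂, h₃, h₄⟩ | ⟨h₁, -, h₂, h₃, h₄⟩ <;> simp [Prod.le_def] <;> omega

end vertices

section adjacency

variable {l l' c c' i j : ℕ} {u v : VS}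

theorem mem_vertsS_of_adjS (h : (gadgetS k n a).graph.Adj u v) :
    u ∈ vertsS k n ∧ v ∈ vertsS k n := by
  simp only [gadgetS, SimpleGraph.fromRel_adj, adjRelS] at h
  tauto

theorem mem_vertsD_of_adjD {u v : VD} (h : (gadgetD k m b).graph.Adj u v) :
    u ∈ vertsD k m ∧ v ∈ vertsD k m := by
  simp only [gadgetD, SimpleGraph.fromRel_adj, adjRelD] at h
  tauto

theorem adjS_zS_zS (hl : l ≤ k + 1) (hl' : l' ≤ k + 1) (hll' : l ≠ l') :
    (gadgetS k n a).graph.Adj (zS l) (zS l') := by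
  simp only [gadgetS, SimpleGraph.fromRel_adj]
  exact ⟨by simpa [zS] using hll', Or.inl ⟨zS_mem hl, zS_mem hl', Or.inl ⟨rfl, rfl⟩⟩⟩

theorem adjS_zS_yS (hi : 1 ≤ i) (hik : i ≤ k) (ha : 1 ≤ a i) (han : a i ≤ n) :
    (gadgetS k n a).graph.Adj (zS 0) (yS i (a i)) := by
  simp only [gadgetS, SimpleGraph.fromRel_adj]
  exact ⟨by simp [zS, yS],
    Or.inl ⟨zS_mem (Nat.zero_le _), yS_mem hi hik ha han, Or.inr ⟨rfl, rfl, rfl⟩⟩⟩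

theorem adjS_cases (h : (gadgetS k n a).graph.Adj u v) :
    u.1 = 0 ∧ v.1 = 0 ∨ u = zS 0 ∧ v.1 = 1 ∧ v.2.2 = a v.2.1 ∨
      v = zS 0 ∧ u.1 = 1 ∧ u.2.2 = a u.2.1 := by
  simp only [gadgetS, SimpleGraph.fromRel_adj, adjRelS] at h
  tauto

theorem exists_eq_zS_of_adjS_zS (hl : 1 ≤ l) (h : (gadgetS k n a).graph.Adj (zS l) v) :
    ∃ l' ≤ k + 1, l' ≠ l ∧ v = zS l' := by
  rcases mem_vertsS (mem_vertsS_of_adjS h).2 with ⟨l', hl', rfl⟩ | hv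
  · exact ⟨l', hl', fun h' => h.ne (h' ▸ rfl), rfl⟩
  · rcases adjS_cases h with ⟨-, h₁⟩ | ⟨h₀, -⟩ | ⟨-, h₁, -⟩
    · simp [hv.1] at h₁
    · simp [zS] at h₀; omega
    · simp [zS] at h₁

theorem adjS_zS_zero_cases (h : (gadgetS k n a).graph.Adj (zS 0) v) :
    (∃ l, 1 ≤ l ∧ l ≤ k + 1 ∧ v = zS l) ∨ v ∈ initBdryYS k n ∧ v.2.2 = a v.2.1 := by
  rcases mem_vertsS (mem_vertsS_of_adjS h).2 with ⟨l, hl, rfl⟩ | hv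
  · exact Or.inl ⟨l, Nat.pos_of_ne_zero fun h₀ => h.ne (by rw [h₀]), hl, rfl⟩
  · rcases adjS_cases h with ⟨-, h₁⟩ | ⟨-, -, h₂⟩ | ⟨-, h₁, -⟩
    · simp [hv.1] at h₁
    · exact Or.inr ⟨hv, h₂⟩
    · simp [zS] at h₁

theorem eq_zS_zero_of_adjS_bdry (hu : u ∈ initBdryYS k n) (h : (gadgetS k n a).graph.Adj u v) :
    v = zS 0 ∧ u.2.2 = a u.2.1 := by
  rcases adjS_cases h with ⟨h₁, -⟩ | ⟨rfl, -⟩ | h'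
  · simp [hu.1] at h₁
  · simp [zS] at hu; exact absurd hu.1 (by omega)
  · exact ⟨h'.1, h'.2.2⟩

theorem adjD_zD_zD_iff (hl : l ≤ k + 1) (hl' : l' ≤ k + 1) (hc : c ≤ k) (hc' : c' ≤ k)
    (hll' : l ≠ l') :
    (gadgetD k m b).graph.Adj (zD l c) (zD l' c') ↔
      c ≠ c' ∨ l = 0 ∧ c = 0 ∨ l' = 0 ∧ c' = 0 := by
  simp only [gadgetD, SimpleGraph.fromRel_adj, adjRelD, zD_mem hl hc, zD_mem hl' hc', true_and]
  simp only [zD, ne_eq, Prod.mk.injEq, true_and, and_true]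
  omega

theorem adjD_zD_yD_iff (hc : c ≤ k) (hy : yD i j ∈ initBdryYD k m) :
    (gadgetD k m b).graph.Adj (zD 0 c) (yD i j) ↔ c ≠ 0 ∨ j = b i := by
  have hy' : yD i j ∈ vertsD k m := Or.inr hy
  simp only [gadgetD, SimpleGraph.fromRel_adj, adjRelD, zD_mem (Nat.zero_le _) hc, hy',
    true_and]
  simp only [zD, yD, ne_eq, Prod.mk.injEq, true_and, and_true]
  omega

end adjacency

theorem hyInit_eq_yD {T : Set ℕ} (hb : ∀ i, 1 ≤ i → i ≤ k → b i ≤ m) {y : VS}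
    (hy : y ∈ initBdryYS k n) : ∃ j ≤ m, hyInit a b T y = yD y.2.1 j := by
  obtain ⟨h₁, hi, hik, -⟩ := hy
  unfold hyInit
  split
  · exact ⟨b y.2.1, hb _ hi hik, by simp [yD, h₁]⟩
  · exact ⟨0, Nat.zero_le _, by simp [yD, h₁]⟩

theorem hyInit_empty_of_eq {y : VS} (hy : y.1 = 1) (h : y.2.2 = a y.2.1) :
    hyInit a b ∅ y = yD y.2.1 (b y.2.1) := by
  simp [hyInit, h, hy, yD]

section duplicator

structure Admissible (k n m : ℕ) (a b : ℕ → ℕ) (X : Set VD) (β : VS → VD) (g : Pos) : Prop where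
  isHom : PartialHom (gadgetS k n a) (gadgetD k m b) g
  mem_verts : ∀ p ∈ g, p.1 ∈ vertsS k n ∧ p.2 ∈ vertsD k m
  mem_X : ∀ t, (zS 0, t) ∈ g → t ∈ X
  eq_bdry : ∀ y ∈ initBdryYS k n, ∀ t, (y, t) ∈ g → t = β y

def trueStrategy (k n m : ℕ) (a b : ℕ → ℕ) : Set Pos :=
  {g | Admissible k n m a b {zD 0 0} (hyInit a b ∅) g}

def guessStrategy (k n m : ℕ) (a b : ℕ → ℕ) (β : VS → VD) : Set Pos :=
  {g | Admissible k n m a b (zD 0 '' Set.Icc 1 k) β g}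

def Covers (k : ℕ) (g : Pos) : Prop :=
  ∀ c, 1 ≤ c → c ≤ k → ∃ l, 1 ≤ l ∧ (zS l, zD l c) ∈ g

def guessCrit (k n m : ℕ) (a b : ℕ → ℕ) (β : VS → VD) : Set Pos :=
  {g | g ∈ guessStrategy k n m a b β ∧ g.card = k ∧ Covers k g}

variable {X : Set VD} {β : VS → VD} {g : Pos}

namespace Admissible

theorem mono (hg : Admissible k n m a b X β g) {g' : Pos} (h : g' ⊆ g) :
    Admissible k n m a b X β g' :=
  ⟨hg.isHom.mono h, fun p hp => hg.mem_verts p (h hp), fun t ht => hg.mem_X t (h ht),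
    fun y hy t ht => hg.eq_bdry y hy t (h ht)⟩

theorem eq_zD (hg : Admissible k n m a b X β g) {l : ℕ} {t : VD} (hp : (zS l, t) ∈ g) :
    ∃ c ≤ k, t = zD l c :=
  eq_zD_of_mem (hg.mem_verts _ hp).2 (hg.isHom.2.1 hp)

theorem insert_of_adj (hg : Admissible k n m a b X β g) {v : VS} {t : VD}
    (hv : v ∈ vertsS k n) (ht : t ∈ vertsD k m) (hdom : ∀ t', (v, t') ∉ g)
    (hcol : (t.1, t.2.1) = (v.1, v.2.1)) (hX : v = zS 0 → t ∈ X)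
    (hβ : v ∈ initBdryYS k n → t = β v)
    (hadj : ∀ p ∈ g, (gadgetS k n a).graph.Adj v p.1 → (gadgetD k m b).graph.Adj t p.2) :
    Admissible k n m a b X β (insert (v, t) g) := by
  refine ⟨hg.isHom.insert hdom hcol hadj, ?_, ?_, ?_⟩ <;>
    simp only [Finset.mem_insert, Prod.mk.injEq, forall_eq_or_imp]
  · exact ⟨⟨hv, ht⟩, hg.mem_verts⟩
  · rintro t' (⟨rfl, rfl⟩ | h)
    exacts [hX rfl, hg.mem_X t' h]
  · rintro y hy t' (⟨rfl, rfl⟩ | h)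
    exacts [hβ hy, hg.eq_bdry y hy t' h]

theorem exists_insert_zS (hg : Admissible k n m a b X β g) (hcard : g.card ≤ k) {l : ℕ}
    (hl : 1 ≤ l) (hlk : l ≤ k + 1) (hdom : ∀ t, (zS l, t) ∉ g) :
    ∃ c ≤ k, Admissible k n m a b X β (insert (zS l, zD l c) g) := by
  obtain ⟨c, hc, hfree⟩ := Finset.exists_mem_notMem_of_card_lt_card
    (s := g.image fun p => p.2.2.2.1) (t := Finset.range (k + 1))
    (by simpa using Finset.card_image_le.trans_lt (Nat.lt_succ_of_le hcard))
  rw [Finset.mem_range] at hc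
  refine ⟨c, by omega, hg.insert_of_adj (zS_mem hlk) (zD_mem hlk (by omega)) hdom rfl
    (fun h => by simp [zS] at h; omega) (fun h => by simp [zS] at h; exact absurd h.1 (by omega))
    fun ⟨u, s⟩ hp hadj => ?_⟩
  obtain ⟨l', hl', hll', rfl⟩ := exists_eq_zS_of_adjS_zS hl hadj
  obtain ⟨c', hc', rfl⟩ := hg.eq_zD hp
  rw [adjD_zD_zD_iff hlk hl' (by omega) hc' hll'.symm]
  exact Or.inl fun h => hfree (Finset.mem_image.2 ⟨_, hp, by rw [← h]; rfl⟩)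

theorem insert_bdry (hg : Admissible k n m a b X β g) {y : VS} (hy : y ∈ initBdryYS k n)
    (hdom : ∀ t, (y, t) ∉ g) (hβ : ∃ j ≤ m, β y = yD y.2.1 j)
    (hXβ : y.2.2 = a y.2.1 → ∀ t ∈ X, (gadgetD k m b).graph.Adj t (β y)) :
    Admissible k n m a b X β (insert (y, β y) g) := by
  obtain ⟨j, hj, hβy⟩ := hβ
  refine hg.insert_of_adj (Or.inr hy) (hβy ▸ Or.inr ⟨rfl, hy.2.1, hy.2.2.1, hj, rfl⟩) hdom
    (by simp [hβy, yD, hy.1]) (fun h => by simp [h, zS] at hy; exact absurd hy.1 (by omega))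
    (fun _ => rfl) fun p hp hadj => ?_
  obtain ⟨hp₁, ha⟩ := eq_zS_zero_of_adjS_bdry hy hadj
  exact (hXβ ha _ (hg.mem_X _ (hp₁ ▸ hp))).symm

theorem insert_zS_zero (hg : Admissible k n m a b X β g) {t : VD}
    (hdom : ∀ t', (zS 0, t') ∉ g) (htX : t ∈ X) (ht : ∃ c ≤ k, t = zD 0 c)
    (hz : ∀ l c, 1 ≤ l → l ≤ k + 1 → c ≤ k → (zS l, zD l c) ∈ g →
      (gadgetD k m b).graph.Adj t (zD l c))
    (hXβ : ∀ y ∈ initBdryYS k n, y.2.2 = a y.2.1 → (gadgetD k m b).graph.Adj t (β y)) :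
    Admissible k n m a b X β (insert (zS 0, t) g) := by
  obtain ⟨c, hc, rfl⟩ := ht
  refine hg.insert_of_adj (zS_mem (Nat.zero_le _)) (zD_mem (Nat.zero_le _) hc) hdom rfl
    (fun _ => htX) (fun h => by simp [zS] at h; exact absurd h.1 (by omega))
    fun ⟨u, s⟩ hp hadj => ?_
  rcases adjS_zS_zero_cases hadj with ⟨l, hl, hlk, rfl⟩ | ⟨hy, ha⟩
  · obtain ⟨c', hc', rfl⟩ := hg.eq_zD hp
    exact hz l c' hl hlk hc' hp
  · exact hg.eq_bdry _ hy _ hp ▸ hXβ _ hy ha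

end Admissible

theorem hasBoundaryFun_admissible :
    HasBoundaryFun {g | Admissible k n m a b X β g} (initBdryYS k n) β :=
  fun _ hg => hg.eq_bdry

theorem isCriticalStrategy_admissible (crit : Set Pos)
    (hX : ∀ t ∈ X, ∃ c ≤ k, t = zD 0 c)
    (hβ : ∀ y ∈ initBdryYS k n, ∃ j ≤ m, β y = yD y.2.1 j)
    (hXβ : ∀ t ∈ X, ∀ y ∈ initBdryYS k n, y.2.2 = a y.2.1 →
      (gadgetD k m b).graph.Adj t (β y))
    (hcrit : ∀ g ∈ crit, Admissible k n m a b X β g ∧ g.card = k)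
    (hext : ∀ g, Admissible k n m a b X β g → g ∉ crit → g.card ≤ k → ∃ t ∈ X,
      ∀ l c, 1 ≤ l → l ≤ k + 1 → c ≤ k → (zS l, zD l c) ∈ g →
        (gadgetD k m b).graph.Adj t (zD l c)) :
    IsCriticalStrategy (gadgetS k n a) (gadgetD k m b) (vertsS k n) (vertsD k m) (k + 1)
      {g | Admissible k n m a b X β g} crit := by
  refine ⟨⟨∅, ⟨partialHom_empty, by simp, by simp, by simp⟩⟩, fun g hg => (hcrit g hg).1,
    fun g hg => hg.mem_verts, fun g hg => hg.isHom, fun g hg => by simpa using (hcrit g hg).2,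
    fun g hg g' h => hg.mono h, fun g hg hgc hcard v hv => ?_⟩
  by_cases hdom : ∃ t, (v, t) ∈ g
  · obtain ⟨t, ht⟩ := hdom
    exact ⟨t, (hg.mem_verts _ ht).2, by rwa [Finset.insert_eq_of_mem ht]⟩
  simp only [not_exists] at hdom
  rcases mem_vertsS hv with ⟨l, hl, rfl⟩ | hy
  · obtain rfl | hl₀ := Nat.eq_zero_or_pos l
    · obtain ⟨t, htX, hadj⟩ := hext g hg hgc (by omega)
      obtain ⟨c, hc, rfl⟩ := hX t htX
      exact ⟨_, zD_mem hl hc, hg.insert_zS_zero hdom htX ⟨c, hc, rfl⟩ hadj (hXβ _ htX)⟩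
    · obtain ⟨c, hc, hins⟩ := hg.exists_insert_zS (by omega) hl₀ hl hdom
      exact ⟨_, zD_mem hl hc, hins⟩
  · obtain ⟨j, hj, hβy⟩ := hβ v hy
    exact ⟨β v, hβy ▸ Or.inr ⟨rfl, hy.2.1, hy.2.2.1, hj, rfl⟩,
      hg.insert_bdry hy hdom ⟨j, hj, hβy⟩ fun ha t ht => hXβ t ht v hy ha⟩

theorem isCriticalStrategy_trueStrategy (hb : ∀ i, 1 ≤ i → i ≤ k → b i ≤ m) :
    IsCriticalStrategy (gadgetS k n a) (gadgetD k m b) (vertsS k n) (vertsD k m) (k + 1)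
      (trueStrategy k n m a b) ∅ := by
  refine isCriticalStrategy_admissible ∅ (fun t ht => ⟨0, Nat.zero_le _, ht⟩)
    (fun y hy => hyInit_eq_yD hb hy) ?_ (by simp) fun g _ _ _ => ⟨zD 0 0, rfl, ?_⟩
  · rintro t rfl y hy ha
    obtain ⟨hy₁, hi, hik, -⟩ := hy
    rw [hyInit_empty_of_eq hy₁ ha,
      adjD_zD_yD_iff (Nat.zero_le _) ⟨rfl, hi, hik, hb _ hi hik, rfl⟩]
    exact Or.inr rfl
  · intro l c hl hlk hc _
    rw [adjD_zD_zD_iff (Nat.zero_le _) hlk (Nat.zero_le _) hc (by omega)]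
    omega

theorem le_card_filter_of_covers (h : Covers k g) :
    k ≤ (g.filter fun p => p.1.1 = 0 ∧ 1 ≤ p.1.2.1).card :=
  calc k = (Finset.Icc 1 k).card := by simp
    _ ≤ ((g.filter fun p => p.1.1 = 0 ∧ 1 ≤ p.1.2.1).image fun p => p.2.2.2.1).card :=
      Finset.card_le_card fun c hc => by
        obtain ⟨l, hl, hp⟩ := h c (Finset.mem_Icc.1 hc).1 (Finset.mem_Icc.1 hc).2
        exact Finset.mem_image.2 ⟨_, Finset.mem_filter.2 ⟨hp, rfl, hl⟩, rfl⟩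
    _ ≤ _ := Finset.card_image_le

theorem isCriticalStrategy_guessStrategy
    (hβ : ∀ y ∈ initBdryYS k n, ∃ j ≤ m, β y = yD y.2.1 j) :
    IsCriticalStrategy (gadgetS k n a) (gadgetD k m b) (vertsS k n) (vertsD k m) (k + 1)
      (guessStrategy k n m a b β) (guessCrit k n m a b β) := by
  refine isCriticalStrategy_admissible _ ?_ hβ ?_ (fun g hg => ⟨hg.1, hg.2.1⟩)
    fun g hg hgc hcard => ?_
  · rintro t ⟨c, hc, rfl⟩
    exact ⟨c, hc.2, rfl⟩
  · rintro t ⟨c, hc, rfl⟩ y hy -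
    obtain ⟨j, hj, hβy⟩ := hβ y hy
    rw [hβy, adjD_zD_yD_iff hc.2 ⟨rfl, hy.2.1, hy.2.2.1, hj, rfl⟩]
    exact Or.inl (by have := hc.1; omega)
  · obtain ⟨c, hc, hck, hfree⟩ : ∃ c, 1 ≤ c ∧ c ≤ k ∧ ∀ l, 1 ≤ l → (zS l, zD l c) ∉ g := by
      by_contra! hcov
      exact hgc ⟨hg, le_antisymm hcard ((le_card_filter_of_covers hcov).trans
        (Finset.card_filter_le _ _)), hcov⟩
    refine ⟨zD 0 c, ⟨c, ⟨hc, hck⟩, rfl⟩, fun l c' hl hlk hc' hp => ?_⟩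
    rw [adjD_zD_zD_iff (Nat.zero_le _) hlk hck hc' (by omega)]
    exact Or.inl fun h => hfree l hl (h ▸ hp)

theorem guessCrit_subset_trueStrategy : guessCrit k n m a b β ⊆ trueStrategy k n m a b := by
  rintro g ⟨hg, hcard, hcov⟩
  have hz : ∀ p ∈ g, p.1.1 = 0 ∧ 1 ≤ p.1.2.1 := Finset.card_filter_eq_iff.1
    (le_antisymm (Finset.card_filter_le _ _) (hcard ▸ le_card_filter_of_covers hcov))
  exact ⟨hg.isHom, hg.mem_verts, fun t ht => absurd (hz _ ht).2 (by simp [zS]),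
    fun y hy t ht => absurd (hz _ ht).1 (by simp [hy.1])⟩

end duplicator

section spoiler

def yBlock (a b : ℕ → ℕ) (j : ℕ) : Pos :=
  (Finset.Icc 1 j).image fun i => (yS i (a i), yD i (b i))

def zBlock (f : ℕ → ℕ) (j : ℕ) : Pos :=
  (Finset.Icc 1 j).image fun l => (zS l, zD l (f l))

theorem card_yBlock_le (j : ℕ) : (yBlock a b j).card ≤ j :=
  Finset.card_image_le.trans (by simp)

theorem card_zBlock_le (f : ℕ → ℕ) (j : ℕ) : (zBlock f j).card ≤ j :=
  Finset.card_image_le.trans (by simp)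

theorem mem_yBlock {i j : ℕ} (hi : 1 ≤ i) (hij : i ≤ j) :
    (yS i (a i), yD i (b i)) ∈ yBlock a b j :=
  Finset.mem_image_of_mem _ (Finset.mem_Icc.2 ⟨hi, hij⟩)

theorem mem_zBlock {f : ℕ → ℕ} {l j : ℕ} (hl : 1 ≤ l) (hlj : l ≤ j) :
    (zS l, zD l (f l)) ∈ zBlock f j :=
  Finset.mem_image_of_mem _ (Finset.mem_Icc.2 ⟨hl, hlj⟩)

theorem yBlock_succ (j : ℕ) :
    yBlock a b (j + 1) =
      insert (yS (j + 1) (a (j + 1)), yD (j + 1) (b (j + 1))) (yBlock a b j) := by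
  rw [yBlock, ← Finset.insert_Icc_right_eq_Icc_add_one (by omega), Finset.image_insert]
  rfl

theorem zBlock_update_succ (f : ℕ → ℕ) (j c : ℕ) :
    zBlock (Function.update f (j + 1) c) (j + 1) =
      insert (zS (j + 1), zD (j + 1) c) (zBlock f j) := by
  rw [zBlock, ← Finset.insert_Icc_right_eq_Icc_add_one (by omega), Finset.image_insert,
    Function.update_self]
  congr 1
  refine Finset.image_congr fun l hl => ?_
  simp only [Finset.coe_Icc, Set.mem_Icc] at hl
  simp only [Function.update_of_ne (show l ≠ j + 1 by omega)]

theorem surjOn_of_partialHom_zBlock {f : ℕ → ℕ} (hf : ∀ l, 1 ≤ l → l ≤ k + 1 → f l ≤ k)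
    (hom : PartialHom (gadgetS k n a) (gadgetD k m b) (zBlock f (k + 1))) :
    Set.SurjOn f (Finset.Icc 1 (k + 1)) (Finset.range (k + 1)) := by
  have hinj : Set.InjOn f (Finset.Icc 1 (k + 1)) := by
    intro l hl l' hl' h
    simp only [Finset.coe_Icc, Set.mem_Icc] at hl hl'
    by_contra hne
    have hadj := hom.2.2 (mem_zBlock hl.1 hl.2) (mem_zBlock hl'.1 hl'.2)
      (adjS_zS_zS hl.2 hl'.2 hne)
    rw [adjD_zD_zD_iff hl.2 hl'.2 (hf l hl.1 hl.2) (hf l' hl'.1 hl'.2) hne] at hadj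
    omega
  refine Finset.surjOn_of_injOn_of_card_le f (fun l hl => ?_) hinj (by simp)
  simp only [Finset.coe_Icc, Set.mem_Icc, Finset.coe_range, Set.mem_Iio] at hl ⊢
  have := hf l hl.1 hl.2
  omega

theorem reach_yBlock_of_subset (ha₁ : 1 ≤ a 1) (ha₁n : a 1 ≤ n) (hk : 1 ≤ k) {p : Pos}
    (hp : yBlock a b k ⊆ p) :
    SpoilerReach (gadgetS k n a) (gadgetD k m b) (vertsS k n) (vertsD k m) (k + 1) p
      (yBlock a b k) := by
  -- Spoiler lifts the pebbles outside `yBlock a b k` by placing one on `y¹_{a(1)}` once more.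
  have hmem := mem_yBlock (a := a) (b := b) le_rfl hk
  refine .move _ (yS 1 (a 1)) hp ((card_yBlock_le k).trans_lt (by omega))
    (yS_mem le_rfl hk ha₁ ha₁n) fun t _ => .of_partialHom fun hom => ?_
  rw [hom.1 (Finset.mem_insert_self _ _) (Finset.mem_insert_of_mem hmem),
    Finset.insert_eq_of_mem hmem]
  exact .refl

theorem reach_yBlock_of_true (ha : ∀ i, 1 ≤ i → i ≤ k → 1 ≤ a i ∧ a i ≤ n) (hk : 1 ≤ k)
    {p : Pos} (hp : (zS 0, zD 0 0) ∈ p) :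
    SpoilerReach (gadgetS k n a) (gadgetD k m b) (vertsS k n) (vertsD k m) (k + 1) p
      (yBlock a b k) := by
  suffices ∀ j (hj : j ≤ k), ∀ p, insert (zS 0, zD 0 0) (yBlock a b j) ⊆ p →
      SpoilerReach (gadgetS k n a) (gadgetD k m b) (vertsS k n) (vertsD k m) (k + 1) p
        (yBlock a b k) from
    this 0 (Nat.zero_le _) p (by simpa [yBlock] using hp)
  intro j hj
  induction hj using Nat.decreasingInduction with
  | self =>
    exact fun p hp => reach_yBlock_of_subset (ha 1 le_rfl hk).1 (ha 1 le_rfl hk).2 hk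
      ((Finset.subset_insert _ _).trans hp)
  | of_succ j hj ih =>
    intro p hp
    obtain ⟨ha₁, ha₂⟩ := ha (j + 1) (by omega) hj
    refine .move _ (yS (j + 1) (a (j + 1))) hp
      ((Finset.card_insert_le _ _).trans_lt
        (by have := card_yBlock_le (a := a) (b := b) j; omega))
      (yS_mem (by omega) hj ha₁ ha₂) fun t ht => .of_partialHom fun hom => ?_
    obtain ⟨j', hj', rfl⟩ := eq_yD_of_mem (i := j + 1) ht (hom.2.1 (Finset.mem_insert_self _ _))
    have hadj := hom.2.2 (Finset.mem_insert_of_mem (Finset.mem_insert_self _ _))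
      (Finset.mem_insert_self _ _) (adjS_zS_yS (by omega) hj ha₁ ha₂)
    rw [adjD_zD_yD_iff (Nat.zero_le _) ⟨rfl, j.succ_pos, hj, hj', rfl⟩] at hadj
    obtain rfl : j' = b (j + 1) := hadj.resolve_left (by simp)
    exact ih _ (by rw [yBlock_succ, Finset.insert_comm])

theorem reach_yBlock_of_zBlock_full (ha : ∀ i, 1 ≤ i → i ≤ k → 1 ≤ a i ∧ a i ≤ n)
    (hk : 1 ≤ k) {f : ℕ → ℕ} (hf : ∀ l, 1 ≤ l → l ≤ k + 1 → f l ≤ k) :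
    SpoilerReach (gadgetS k n a) (gadgetD k m b) (vertsS k n) (vertsD k m) (k + 1)
      (zBlock f (k + 1)) (yBlock a b k) := by
  refine .of_partialHom fun hom => ?_
  have hsurj := surjOn_of_partialHom_zBlock hf hom
  obtain ⟨l₀, hl₀, hf₀⟩ := hsurj (show 0 ∈ (Finset.range (k + 1) : Set ℕ) by simp)
  simp only [Finset.coe_Icc, Set.mem_Icc] at hl₀
  have hmem₀ : (zS l₀, zD l₀ 0) ∈ zBlock f (k + 1) := hf₀ ▸ mem_zBlock hl₀.1 hl₀.2
  refine .move _ (zS 0) (Finset.erase_subset (zS l₀, zD l₀ 0) _) ?_ (zS_mem (Nat.zero_le _))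
    fun t ht => .of_partialHom fun hom' => ?_
  · rw [Finset.card_erase_of_mem hmem₀]
    have := card_zBlock_le f (k + 1)
    omega
  obtain ⟨c, hc, rfl⟩ := eq_zD_of_mem (l := 0) ht (hom'.2.1 (Finset.mem_insert_self _ _))
  obtain rfl | hc₀ := Nat.eq_zero_or_pos c
  · exact reach_yBlock_of_true ha hk (Finset.mem_insert_self _ _)
  exfalso
  obtain ⟨l, hl, rfl⟩ := hsurj (show c ∈ (Finset.range (k + 1) : Set ℕ) by simp; omega)
  simp only [Finset.coe_Icc, Set.mem_Icc] at hl
  have hll₀ : l ≠ l₀ := by rintro rfl; omega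
  have hmem : (zS l, zD l (f l)) ∈ (zBlock f (k + 1)).erase (zS l₀, zD l₀ 0) :=
    Finset.mem_erase.2 ⟨by simp [zS, hll₀], mem_zBlock hl.1 hl.2⟩
  have hadj := hom'.2.2 (Finset.mem_insert_self _ _) (Finset.mem_insert_of_mem hmem)
    (adjS_zS_zS (Nat.zero_le _) hl.2 (by omega))
  rw [adjD_zD_zD_iff (Nat.zero_le _) hl.2 hc hc (by omega)] at hadj
  omega

theorem reach_yBlock_of_zBlock (ha : ∀ i, 1 ≤ i → i ≤ k → 1 ≤ a i ∧ a i ≤ n) (hk : 1 ≤ k)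
    {j : ℕ} (hj : j ≤ k + 1) {f : ℕ → ℕ} (hf : ∀ l, 1 ≤ l → l ≤ j → f l ≤ k) :
    SpoilerReach (gadgetS k n a) (gadgetD k m b) (vertsS k n) (vertsD k m) (k + 1)
      (zBlock f j) (yBlock a b k) := by
  induction hj using Nat.decreasingInduction generalizing f with
  | self => exact reach_yBlock_of_zBlock_full ha hk hf
  | of_succ j hj ih =>
    refine .move _ (zS (j + 1)) subset_rfl ((card_zBlock_le f j).trans_lt (by omega))
      (zS_mem hj) fun t ht => .of_partialHom fun hom => ?_
    obtain ⟨c, hc, rfl⟩ := eq_zD_of_mem (l := j + 1) ht (hom.2.1 (Finset.mem_insert_self _ _))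
    rw [← zBlock_update_succ]
    refine ih fun l hl hlj => ?_
    rcases eq_or_ne l (j + 1) with rfl | hne
    · simpa using hc
    · simpa [hne] using hf l hl (by omega)

theorem reach_yBlock (ha : ∀ i, 1 ≤ i → i ≤ k → 1 ≤ a i ∧ a i ≤ n) :
    SpoilerReach (gadgetS k n a) (gadgetD k m b) (vertsS k n) (vertsD k m) (k + 1) ∅
      (yBlock a b k) := by
  obtain rfl | hk := Nat.eq_zero_or_pos k
  · simpa [yBlock] using .refl
  · have h₀ : zBlock (fun _ => 0) 0 = ∅ := by simp [zBlock]
    exact h₀ ▸ reach_yBlock_of_zBlock ha hk (Nat.zero_le _) fun _ _ _ => Nat.zero_le _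

end spoiler

end InitGadget

theorem initialization_gadget_exists_general (k n m : ℕ) (a b : ℕ → ℕ)
    (hwf : ∀ i, 1 ≤ i → i ≤ k → 1 ≤ a i ∧ a i ≤ n ∧ 1 ≤ b i ∧ b i ≤ m) :
    ∃ (GS : ColoredGraph (ℕ × ℕ × ℕ) (ℕ × ℕ)) (GD : ColoredGraph (ℕ × ℕ × ℕ × ℕ) (ℕ × ℕ))
      (S : Set (ℕ × ℕ × ℕ)) (D : Set (ℕ × ℕ × ℕ × ℕ)),
      -- the gadget is finite
      S.Finite ∧ D.Finite ∧
      -- the output block is part of the gadget and is its boundary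
      initBdryYS k n ⊆ S ∧ initBdryYD k m ⊆ D ∧
      -- all edges lie inside the gadget
      (∀ u v, GS.graph.Adj u v → u ∈ S ∧ v ∈ S) ∧
      (∀ u v, GD.graph.Adj u v → u ∈ D ∧ v ∈ D) ∧
      -- the output block is colored per block, matched between the two sides,
      -- and its colors occur nowhere else in the gadget
      (∀ v ∈ initBdryYS k n, GS.color v = (1, v.2.1)) ∧
      (∀ v ∈ initBdryYD k m, GD.color v = (1, v.2.1)) ∧
      (∀ v ∈ S, (GS.color v).1 = 1 → v ∈ initBdryYS k n) ∧
      (∀ v ∈ D, (GD.color v).1 = 1 → v ∈ initBdryYD k m) ∧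
      -- (i) Spoiler can reach `q on y` from the empty position
      PebbleCG.SpoilerReach GS GD S D (k + 1) (∅ : Finset ((ℕ × ℕ × ℕ) × ℕ × ℕ × ℕ × ℕ))
        ((Finset.Icc 1 k).image fun i => ((1, i, a i), (1, i, b i, 0))) ∧
      -- (ii) and (iii)
      ∃ I : Set (Finset ((ℕ × ℕ × ℕ) × ℕ × ℕ × ℕ × ℕ)),
        PebbleCG.IsCriticalStrategy GS GD S D (k + 1) I ∅ ∧
        PebbleCG.HasBoundaryFun I (initBdryYS k n) (hyInit a b ∅) ∧
        ∀ (a' b' : ℕ → ℕ) (T' : Set ℕ),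
          (∀ i, 1 ≤ i → i ≤ k → 1 ≤ a' i ∧ a' i ≤ n ∧ 1 ≤ b' i ∧ b' i ≤ m) →
          T' ⊆ Set.Icc 1 k →
          ∃ I' crit' : Set (Finset ((ℕ × ℕ × ℕ) × ℕ × ℕ × ℕ × ℕ)),
            PebbleCG.IsCriticalStrategy GS GD S D (k + 1) I' crit' ∧
            PebbleCG.HasBoundaryFun I' (initBdryYS k n) (hyInit a' b' T') ∧
            crit' ⊆ I := by
  open InitGadget in
  exact ⟨gadgetS k n a, gadgetD k m b, vertsS k n, vertsD k m, vertsS_finite, vertsD_finite,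
    Set.subset_union_right, Set.subset_union_right, fun _ _ => mem_vertsS_of_adjS,
    fun _ _ => mem_vertsD_of_adjD, fun v hv => by simp [gadgetS, hv.1],
    fun v hv => by simp [gadgetD, hv.1],
    fun v hv h => hv.resolve_left fun h' => by simp [gadgetS, h'.1] at h,
    fun v hv h => hv.resolve_left fun h' => by simp [gadgetD, h'.1] at h,
    reach_yBlock fun i hi hik => ⟨(hwf i hi hik).1, (hwf i hi hik).2.1⟩,
    trueStrategy k n m a b, isCriticalStrategy_trueStrategy fun i hi hik => (hwf i hi hik).2.2.2,
    hasBoundaryFun_admissible,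
    fun a' b' T' hwf' _ => ⟨_, _,
      isCriticalStrategy_guessStrategy fun y hy =>
        hyInit_eq_yD (fun i hi hik => (hwf' i hi hik).2.2.2) hy,
      hasBoundaryFun_admissible, guessCrit_subset_trueStrategy⟩⟩

/-- for all `k ≥ 2`, `n, m ≥ 1` and every valid configuration
`q = (a,b,∅)` there is a gadget `INIT = (INIT_S, INIT_D)` — a pair of finite
vertex-colored graphs whose boundary is an output block of `y`-vertices, colored per
block and matched between the two sides — such that in the existential `(k+1)`-pebble
game on `INIT`: (i) Spoiler can reach `q on y` from the empty position; (ii) Duplicator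
has a winning strategy `I` with boundary function `h^y_q`; and (iii) for every
configuration `q'` Duplicator has a critical strategy `I_{q'}` with boundary function
`h^y_{q'}` whose critical positions all belong to `I`. -/
theorem initialization_gadget_exists (k n m : ℕ) (hk : 2 ≤ k) (hn : 1 ≤ n) (hm : 1 ≤ m)
    (a b : ℕ → ℕ)
    (hwf : ∀ i, 1 ≤ i → i ≤ k → 1 ≤ a i ∧ a i ≤ n ∧ 1 ≤ b i ∧ b i ≤ m) :
    ∃ (GS : ColoredGraph (ℕ × ℕ × ℕ) (ℕ × ℕ)) (GD : ColoredGraph (ℕ × ℕ × ℕ × ℕ) (ℕ × ℕ))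
      (S : Set (ℕ × ℕ × ℕ)) (D : Set (ℕ × ℕ × ℕ × ℕ)),
      -- the gadget is finite
      S.Finite ∧ D.Finite ∧
      -- the output block is part of the gadget and is its boundary
      initBdryYS k n ⊆ S ∧ initBdryYD k m ⊆ D ∧
      -- all edges lie inside the gadget
      (∀ u v, GS.graph.Adj u v → u ∈ S ∧ v ∈ S) ∧
      (∀ u v, GD.graph.Adj u v → u ∈ D ∧ v ∈ D) ∧
      -- the output block is colored per block, matched between the two sides,
      -- and its colors occur nowhere else in the gadget
      (∀ v ∈ initBdryYS k n, GS.color v = (1, v.2.1)) ∧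
      (∀ v ∈ initBdryYD k m, GD.color v = (1, v.2.1)) ∧
      (∀ v ∈ S, (GS.color v).1 = 1 → v ∈ initBdryYS k n) ∧
      (∀ v ∈ D, (GD.color v).1 = 1 → v ∈ initBdryYD k m) ∧
      -- (i) Spoiler can reach `q on y` from the empty position
      PebbleCG.SpoilerReach GS GD S D (k + 1) (∅ : Finset ((ℕ × ℕ × ℕ) × ℕ × ℕ × ℕ × ℕ))
        ((Finset.Icc 1 k).image fun i => ((1, i, a i), (1, i, b i, 0))) ∧
      -- (ii) and (iii)
      ∃ I : Set (Finset ((ℕ × ℕ × ℕ) × ℕ × ℕ × ℕ × ℕ)),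
        PebbleCG.IsCriticalStrategy GS GD S D (k + 1) I ∅ ∧
        PebbleCG.HasBoundaryFun I (initBdryYS k n) (hyInit a b ∅) ∧
        ∀ (a' b' : ℕ → ℕ) (T' : Set ℕ),
          (∀ i, 1 ≤ i → i ≤ k → 1 ≤ a' i ∧ a' i ≤ n ∧ 1 ≤ b' i ∧ b' i ≤ m) →
          T' ⊆ Set.Icc 1 k →
          ∃ I' crit' : Set (Finset ((ℕ × ℕ × ℕ) × ℕ × ℕ × ℕ × ℕ)),
            PebbleCG.IsCriticalStrategy GS GD S D (k + 1) I' crit' ∧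
            PebbleCG.HasBoundaryFun I' (initBdryYS k n) (hyInit a' b' T') ∧
            crit' ⊆ I :=
  initialization_gadget_exists_general k n m a b hwf
end
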